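/- arXiv:1707.07216 — 6 statements merged into one kernel-verified Lean document; each statement's English description precedes it below -/
import Mathlib

section
/- If H is a simple graph on n vertices with Ore-degree θ(H) ≤ 4, then H is a subgraph of the square of the Hamiltonian path on n vertices, i.e., of the graph P_n^2 on vertex set {1,...,n} with edges between vertices at distance at most 2. -/
/-!
When `θ(H) ≤ 4`, a vertex of degree at least 3 has degree exactly 3 and only leaves as
neighbours, so every component of `H` is either the star `K_{1,3}` or has maximum degree at
most 2. In the latter case a longest path of the component is Hamiltonian, and the only edge
off it can join its two ends, so the component is a subgraph of the cycle `C_k`. Both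
`K_{1,3}` (centre at position 1) and `C_k` (laid out as `0, 2, 4, …, 5, 3, 1`) embed in
`P_k²`, and placing the components one after another along the path embeds `H` in `P_n²`.
-/

/-- The square of the Hamiltonian path on `n` vertices: vertices `0,…,n-1`, with an edge
between two distinct vertices iff they are at distance at most 2. -/
def pathSquare (n : ℕ) : SimpleGraph (Fin n) :=
  SimpleGraph.fromRel (fun i j : Fin n => |(i : ℤ) - (j : ℤ)| ≤ 2)

namespace SimpleGraph

variable {V W V' W' : Type*}

lemma IsContained.sum {A : SimpleGraph V} {A' : SimpleGraph V'} {B : SimpleGraph W}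
    {B' : SimpleGraph W'} (hA : A ⊑ A') (hB : B ⊑ B') : A ⊕g B ⊑ A' ⊕g B' := by
  obtain ⟨f⟩ := hA
  obtain ⟨g⟩ := hB
  exact ⟨(f.toHom.sum g.toHom).toCopy (Sum.map_injective.mpr ⟨f.injective, g.injective⟩)⟩

lemma isContained_sum_induce_compl (G : SimpleGraph V) {s : Set V}
    (hs : ∀ x y, G.Adj x y → x ∈ s → y ∈ s) : G ⊑ G.induce s ⊕g G.induce sᶜ := by
  classical
  refine ⟨⟨⟨(Equiv.Set.sumCompl s).symm, fun {x y} hxy ↦ ?_⟩,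
    (Equiv.Set.sumCompl s).symm.injective⟩⟩
  by_cases hx : x ∈ s <;> by_cases hy : y ∈ s
  · simpa [Equiv.Set.sumCompl_symm_apply_of_mem, hx, hy]
  · exact absurd (hs x y hxy hx) hy
  · exact absurd (hs y x hxy.symm hy) hx
  · simpa [Equiv.Set.sumCompl_symm_apply_of_notMem, hx, hy]

lemma cycleGraph_adj_iff_val {n : ℕ} {u v : Fin n} :
    (cycleGraph n).Adj u v ↔ (u : ℕ) ≠ v ∧
      ((u : ℕ) + 1 = v ∨ (v : ℕ) + 1 = u ∨ (u : ℕ) + 1 = n ∧ (v : ℕ) = 0 ∨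
        (v : ℕ) + 1 = n ∧ (u : ℕ) = 0) := by
  rw [cycleGraph_adj']
  have := u.isLt
  have := v.isLt
  rcases lt_or_ge u v with h | h
  · rw [Fin.coe_sub_iff_lt.mpr h, Fin.coe_sub_iff_le.mpr h.le]
    rw [Fin.lt_def] at h
    omega
  · rw [Fin.coe_sub_iff_le.mpr h]
    rcases h.lt_or_eq with h | rfl
    · rw [Fin.coe_sub_iff_lt.mpr h]
      rw [Fin.lt_def] at h
      omega
    · rw [Fin.coe_sub_iff_le.mpr le_rfl]
      omega

end SimpleGraph

open SimpleGraph

lemma pathSquare_adj {n : ℕ} {i j : Fin n} :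
    (pathSquare n).Adj i j ↔ (i : ℕ) ≠ j ∧ (i : ℕ) ≤ j + 2 ∧ (j : ℕ) ≤ i + 2 := by
  rw [pathSquare, fromRel_adj, abs_sub_comm, or_self, abs_le, Ne, Fin.ext_iff]
  omega

lemma pathSquare_sum_isContained (a b : ℕ) :
    pathSquare a ⊕g pathSquare b ⊑ pathSquare (a + b) := by
  refine ⟨⟨⟨finSumFinEquiv, fun {x y} hxy ↦ ?_⟩, finSumFinEquiv.injective⟩⟩
  rcases x with i | i <;> rcases y with j | j <;> simp_all [pathSquare_adj]
  all_goals omega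

/-- The cycle `0, 1, …, n - 1` laid out on the path: its first half goes to the even positions
in increasing order, its second half to the odd positions in decreasing order, so cyclically
consecutive vertices land at distance at most 2. -/
def zigzag (n : ℕ) (i : Fin n) : Fin n :=
  ⟨if 2 * (i : ℕ) < n then 2 * i else 2 * (n - 1 - i) + 1, by split <;> omega⟩

lemma zigzag_injective (n : ℕ) : Function.Injective (zigzag n) := by
  intro i j h
  simp only [zigzag, Fin.mk.injEq] at h
  ext
  split at h <;> split at h <;> omega

lemma cycleGraph_isContained_pathSquare (n : ℕ) : cycleGraph n ⊑ pathSquare n := by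
  refine ⟨⟨⟨zigzag n, fun {u v} huv ↦ ?_⟩, zigzag_injective n⟩⟩
  rw [cycleGraph_adj_iff_val] at huv
  simp only [pathSquare_adj, zigzag]
  split <;> split <;> omega

namespace SimpleGraph

variable {V : Type*} {G : SimpleGraph V}

lemma Reachable.mem_of_adj_closed {s : Set V} (hs : ∀ x y, G.Adj x y → x ∈ s → y ∈ s)
    {u v : V} (h : G.Reachable u v) (hu : u ∈ s) : v ∈ s := by
  obtain ⟨p⟩ := h
  induction p with
  | nil => exact hu
  | cons hadj _ ih => exact ih (hs _ _ hadj hu)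

lemma isContained_cycleGraph_of_pathList {l : List V} (hnd : l.Nodup) (hall : ∀ x, x ∈ l)
    (hedge : ∀ i j (hi : i < l.length) (hj : j < l.length), i < j → G.Adj l[i] l[j] →
      j = i + 1 ∨ i = 0 ∧ j + 1 = l.length) :
    G ⊑ cycleGraph l.length := by
  classical
  set e := hnd.getEquivOfForallMemList l hall with he
  refine ⟨⟨⟨e.symm, fun {x y} hxy ↦ ?_⟩, e.symm.injective⟩⟩
  obtain ⟨i, rfl⟩ := e.surjective x
  obtain ⟨j, rfl⟩ := e.surjective y
  simp only [he, List.Nodup.getEquivOfForallMemList_apply, List.get_eq_getElem] at hxy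
  have hne : (i : ℕ) ≠ j := fun h ↦ hxy.ne (by simp [h])
  simp only [Equiv.symm_apply_apply, cycleGraph_adj_iff_val]
  rcases Nat.lt_or_gt_of_ne hne with h | h
  · have := hedge i j i.isLt j.isLt h hxy
    omega
  · have := hedge j i j.isLt i.isLt h hxy.symm
    omega

def IsPathList (G : SimpleGraph V) (l : List V) : Prop := l.Nodup ∧ l.IsChain G.Adj

lemma IsPathList.reverse {l : List V} (hl : G.IsPathList l) : G.IsPathList l.reverse :=
  ⟨List.nodup_reverse.mpr hl.1, List.isChain_reverse.mpr (hl.2.imp fun _ _ h ↦ h.symm)⟩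

lemma exists_isPathList_forall_length_le [Fintype V] [Nonempty V] :
    ∃ l, G.IsPathList l ∧ l ≠ [] ∧ ∀ l', G.IsPathList l' → l'.length ≤ l.length := by
  obtain ⟨v⟩ := ‹Nonempty V›
  have hfin : {l | G.IsPathList l}.Finite :=
    (List.finite_length_le V (Fintype.card V)).subset fun l hl ↦ hl.1.length_le_card
  obtain ⟨l, hl, hmax⟩ :=
    Set.exists_max_image _ List.length hfin ⟨[v], by simp [IsPathList]⟩
  refine ⟨l, hl, fun h ↦ ?_, hmax⟩
  simpa [h] using hmax [v] (by simp [IsPathList])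

lemma IsPathList.mem_of_adj_head {l : List V} (hl : G.IsPathList l)
    (hmax : ∀ l', G.IsPathList l' → l'.length ≤ l.length) (h0 : 0 < l.length) {y : V}
    (hy : G.Adj l[0] y) : y ∈ l := by
  by_contra hyl
  have : G.IsPathList (y :: l) := by
    refine ⟨List.nodup_cons.mpr ⟨hyl, hl.1⟩,
      List.isChain_cons.mpr ⟨fun z hz ↦ ?_, hl.2⟩⟩
    rw [List.head?_eq_getElem?, List.getElem?_eq_getElem h0, Option.mem_some_iff] at hz
    exact hz ▸ hy.symm
  simpa using hmax _ this

lemma IsPathList.eq_or_eq_of_adj [Fintype V] [DecidableRel G.Adj] {l : List V}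
    (hl : G.IsPathList l) {i : ℕ} (hi0 : 0 < i) (hi : i + 1 < l.length)
    (hdeg : G.degree l[i] ≤ 2) {y : V} (hy : G.Adj l[i] y) :
    y = l[i - 1] ∨ y = l[i + 1] := by
  classical
  have hchain := List.isChain_iff_getElem.mp hl.2
  have hsub : {l[i - 1], l[i + 1]} ⊆ G.neighborFinset l[i] := by
    intro z hz
    simp only [Finset.mem_insert, Finset.mem_singleton] at hz
    rw [mem_neighborFinset]
    rcases hz with rfl | rfl
    · simpa [Nat.sub_add_cancel hi0] using (hchain (i - 1) (by omega)).symm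
    · exact hchain i hi
  have hne : l[i - 1] ≠ l[i + 1] := by
    rw [Ne, hl.1.getElem_inj_iff]
    omega
  have heq := Finset.eq_of_subset_of_card_le hsub (by rwa [Finset.card_pair hne])
  have : y ∈ G.neighborFinset l[i] := (mem_neighborFinset _ _ _).mpr hy
  simpa [← heq] using this

lemma Connected.isContained_cycleGraph [Fintype V] [DecidableRel G.Adj] (hG : G.Connected)
    (hdeg : ∀ v, G.degree v ≤ 2) : G ⊑ cycleGraph (Fintype.card V) := by
  have := hG.nonempty
  obtain ⟨l, hl, hne, hmax⟩ := G.exists_isPathList_forall_length_le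
  have hpos : 0 < l.length := List.length_pos_iff.mpr hne
  have hinner {i : ℕ} (hi0 : 0 < i) (hi : i + 1 < l.length) {y : V} (hy : G.Adj l[i] y) :
      y = l[i - 1] ∨ y = l[i + 1] :=
    hl.eq_or_eq_of_adj hi0 hi (hdeg _) hy
  have hlast {y : V} (hy : G.Adj l[l.length - 1] y) : y ∈ l := by
    refine List.mem_reverse.mp (hl.reverse.mem_of_adj_head (by simpa using hmax) (by simpa) ?_)
    simpa [List.getElem_reverse] using hy
  have hclosed : ∀ x y, G.Adj x y → x ∈ l → y ∈ l := by
    intro x y hxy hx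
    obtain ⟨i, hi, rfl⟩ := List.getElem_of_mem hx
    by_cases hi0 : i = 0
    · subst hi0
      exact hl.mem_of_adj_head hmax hpos hxy
    by_cases hil : i + 1 = l.length
    · exact hlast (by simpa [← hil] using hxy)
    rcases hinner (by omega) (by omega) hxy with rfl | rfl <;> exact List.getElem_mem _
  have hall (x : V) : x ∈ l :=
    (hG.preconnected l[0] x).mem_of_adj_closed hclosed (List.getElem_mem hpos)
  have hcard : l.length = Fintype.card V := by
    classical
    simpa using Fintype.card_congr (hl.1.getEquivOfForallMemList l hall)
  rw [← hcard]
  refine isContained_cycleGraph_of_pathList hl.1 hall fun i j hi hj hij hadj ↦ ?_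
  by_cases hi0 : i = 0
  · subst hi0
    by_cases hjl : j + 1 = l.length
    · exact .inr ⟨rfl, hjl⟩
    rcases hinner (by omega) (by omega) hadj.symm with h | h <;>
      rw [hl.1.getElem_inj_iff] at h <;> omega
  · rcases hinner (by omega) (by omega) hadj with h | h <;>
      rw [hl.1.getElem_inj_iff] at h <;> omega

lemma isContained_pathSquare_of_star [Fintype V] (c : V)
    (hc : ∀ x y, G.Adj x y → x = c ∨ y = c) (hV : Fintype.card V ≤ 4) :
    G ⊑ pathSquare (Fintype.card V) := by
  classical
  have hpos : 0 < Fintype.card V := Fintype.card_pos_iff.mpr ⟨c⟩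
  -- `c` goes to position 1 (to 0 if it is the only vertex), within distance 2 of all others
  let e := (Fintype.equivFin V).trans
    (Equiv.swap (Fintype.equivFin V c) ⟨min 1 (Fintype.card V - 1), by omega⟩)
  have hec : (e c : ℕ) = min 1 (Fintype.card V - 1) := by simp [e]
  refine ⟨⟨⟨e, fun {x y} hxy ↦ ?_⟩, e.injective⟩⟩
  have hne : (e x : ℕ) ≠ e y := fun h ↦ hxy.ne (e.injective (Fin.ext h))
  have := (e x).isLt
  have := (e y).isLt
  rw [pathSquare_adj]
  rcases hc x y hxy with rfl | rfl <;> omega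

lemma Connected.isContained_pathSquare [Fintype V] [DecidableRel G.Adj] (hG : G.Connected)
    (hθ : ∀ x y, G.Adj x y → G.degree x + G.degree y ≤ 4) :
    G ⊑ pathSquare (Fintype.card V) := by
  by_cases hdeg : ∀ v, G.degree v ≤ 2
  · exact (hG.isContained_cycleGraph hdeg).trans (cycleGraph_isContained_pathSquare _)
  obtain ⟨c, hc⟩ := not_forall.mp hdeg
  classical
  have hleaf {z : V} (hz : G.Adj c z) {y : V} (hy : G.Adj z y) : y = c := by
    have : G.degree z ≤ 1 := by have := hθ c z hz; omega
    exact Finset.card_le_one.mp this y ((mem_neighborFinset _ _ _).mpr hy) c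
      ((mem_neighborFinset _ _ _).mpr hz.symm)
  have hall (x : V) : x = c ∨ G.Adj c x := by
    refine (hG.preconnected c x).mem_of_adj_closed (s := {x | x = c ∨ G.Adj c x})
      (fun x y hxy hx ↦ ?_) (.inl rfl)
    rcases hx with rfl | hx
    · exact .inr hxy
    · exact .inl (hleaf hx hxy)
  obtain ⟨z, hz⟩ : (G.neighborFinset c).Nonempty := by
    rw [← Finset.card_pos, card_neighborFinset_eq_degree]
    omega
  rw [mem_neighborFinset] at hz
  have hV : Fintype.card V ≤ 4 := by
    have hz1 : 1 ≤ G.degree z :=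
      Finset.card_pos.mpr ⟨c, (mem_neighborFinset _ _ _).mpr hz.symm⟩
    have huniv : Finset.univ ⊆ insert c (G.neighborFinset c) := fun x _ ↦ by
      simpa [Finset.mem_insert] using hall x
    have := (Finset.card_le_card huniv).trans (Finset.card_insert_le _ _)
    rw [Finset.card_univ, card_neighborFinset_eq_degree] at this
    have := hθ c z hz
    omega
  refine isContained_pathSquare_of_star c (fun x y hxy ↦ ?_) hV
  rcases hall x with rfl | hx
  · exact .inl rfl
  · exact .inr (hleaf hx hxy)

theorem isContained_pathSquare_of_degree_add_degree_le_four [Fintype V] (G : SimpleGraph V)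
    [DecidableRel G.Adj] (hθ : ∀ x y, G.Adj x y → G.degree x + G.degree y ≤ 4) :
    G ⊑ pathSquare (Fintype.card V) := by
  induction hn : Fintype.card V using Nat.strong_induction_on generalizing V with
  | _ n ih =>
  subst hn
  rcases isEmpty_or_nonempty V with hV | ⟨⟨v⟩⟩
  · exact .of_isEmpty
  classical
  set s := (G.connectedComponentMk v).supp
  have hs (x y : V) (hxy : G.Adj x y) (hx : x ∈ s) : y ∈ s :=
    (ConnectedComponent.connectedComponentMk_eq_of_adj hxy).symm.trans hx
  have hθ_induce (t : Set V) [Fintype t] [DecidableRel (G.induce t).Adj] (x y : t)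
      (hxy : (G.induce t).Adj x y) : (G.induce t).degree x + (G.induce t).degree y ≤ 4 :=
    (add_le_add ((Copy.induce G t).degree_le x) ((Copy.induce G t).degree_le y)).trans
      (hθ _ _ hxy)
  have hs_conn : (G.induce s).Connected := ConnectedComponent.connected_toSimpleGraph _
  have hcompl_lt : Fintype.card ↥sᶜ < Fintype.card V :=
    Fintype.card_subtype_lt (p := (· ∈ sᶜ)) (x := v) (by simp [s])
  have hcard : Fintype.card s + Fintype.card ↥sᶜ = Fintype.card V := by
    rw [← Fintype.card_sum]
    exact Fintype.card_congr (Equiv.Set.sumCompl s)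
  calc G ⊑ G.induce s ⊕g G.induce sᶜ := isContained_sum_induce_compl G hs
    _ ⊑ pathSquare (Fintype.card s) ⊕g pathSquare (Fintype.card ↥sᶜ) :=
      (hs_conn.isContained_pathSquare (hθ_induce s)).sum (ih _ hcompl_lt _ (hθ_induce sᶜ) rfl)
    _ ⊑ pathSquare (Fintype.card V) := hcard ▸ pathSquare_sum_isContained _ _

end SimpleGraph

theorem stmt_4_general {V : Type*} [Fintype V] (n : ℕ)
    (hcard : Fintype.card V = n) (H : SimpleGraph V) [DecidableRel H.Adj]
    (hθ : ∀ x y : V, H.Adj x y → H.degree x + H.degree y ≤ 4) :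
    ∃ f : V → Fin n, Function.Injective f ∧
      ∀ x y : V, H.Adj x y → (pathSquare n).Adj (f x) (f y) := by
  subst hcard
  obtain ⟨f⟩ := H.isContained_pathSquare_of_degree_add_degree_le_four hθ
  exact ⟨f, f.injective, fun _ _ ↦ f.toHom.map_adj⟩

/-- If `H` is a simple graph on `n` vertices in which `deg x + deg y ≤ 4` for every edge
`xy` (i.e. `θ(H) ≤ 4`), then `H` is a subgraph of `P_n²`, the square of the Hamiltonian
path on `n` vertices. -/
theorem stmt_4 {V : Type*} [Fintype V] [DecidableEq V] (n : ℕ)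
    (hcard : Fintype.card V = n) (H : SimpleGraph V) [DecidableRel H.Adj]
    (hθ : ∀ x y : V, H.Adj x y → H.degree x + H.degree y ≤ 4) :
    ∃ f : V → Fin n, Function.Injective f ∧
      ∀ x y : V, H.Adj x y → (pathSquare n).Adj (f x) (f y) :=
  stmt_4_general n hcard H hθ
end

section
/- For every positive integer r and ε > 0 there exists n_0 such that: if G is a graph on n ≥ n_0 vertices with minimum degree at least (1/2 + ε)n and (r+1) divides n, then G contains a K_{1,r}-factor, i.e., n/(r+1) pairwise vertex-disjoint copies of the star K_{1,r}. -/
/-!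
Write `n = (r + 1) m`. It suffices to find a set `C` of `m` centers such that every vertex has
at least `A ≈ (1/2 + γ) m` neighbours in `C` and at least `r A` neighbours outside `C`: then
Hall's theorem, with every center split into `r` slots, matches the `r m` non-centers to the
centers, because at most `r A` leaves already see `A` centers, while more than `r A` leaves
meet the neighbourhood of every center.

Such a `C` exists by counting `m`-sets. For `k` below the mean `#D m / n` by a margin of about
`γ m`, the number of `m`-sets meeting a set `D` in exactly `k` points grows by a factor at least
`1 / (1 - γ)` from `k` to `k + 1` (double counting of swaps). Hence each of the `2 n` constraints
fails for at most a fraction `n (1 - γ) ^ ⌊γ m⌋` of the `m`-sets, and `2 n² (1 - γ) ^ ⌊γ m⌋ < 1`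
for large `m`.
-/

open Finset

theorem le_pow_mul_of_le_mul_succ {N : ℕ → ℝ} {q P : ℝ} {b : ℕ} (hq : 0 ≤ q)
    (hP : ∀ k, N k ≤ P) (hstep : ∀ k < b, N k ≤ q * N (k + 1)) (k : ℕ) (hk : k ≤ b) :
    N k ≤ q ^ (b - k) * P := by
  obtain ⟨i, rfl⟩ := Nat.exists_eq_add_of_le hk
  rw [Nat.add_sub_cancel_left]
  clear hk
  induction i generalizing k with
  | zero => simpa using hP k
  | succ i ih =>
    calc N k ≤ q * N (k + 1) := hstep k (by omega)
      _ ≤ q * (q ^ i * P) := by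
        gcongr
        exact ih (k + 1) (fun l hl => hstep l (by omega))
      _ = q ^ (i + 1) * P := by ring

section InterLevel

variable {V : Type*} [Fintype V] [DecidableEq V]

def interLevel (m : ℕ) (D : Finset V) (k : ℕ) : Finset (Finset V) :=
  {C ∈ powersetCard m univ | #(C ∩ D) = k}

omit [Fintype V] in
theorem card_sdiff_eq_sub_of_card_inter {C D : Finset V} {m k : ℕ} (hC : #C = m)
    (hCD : #(C ∩ D) = k) : #(C \ D) = m - k := by
  have := card_sdiff_add_card_inter C D
  omega

theorem mem_interLevel {m k : ℕ} {D C : Finset V} :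
    C ∈ interLevel m D k ↔ #C = m ∧ #(C ∩ D) = k := by
  simp [interLevel]

/-- Swapping a point `x ∈ C \ D` for a point `y ∈ D \ C` moves `C` up one level, and `C` is
recovered from the new set together with `(y, x)`. -/
theorem card_interLevel_mul_le (m : ℕ) (D : Finset V) (k : ℕ) :
    #(interLevel m D k) * ((m - k) * (#D - k)) ≤
      #(interLevel m D (k + 1)) * ((k + 1) * (#Dᶜ - (m - (k + 1)))) := by
  have hdown : #((interLevel m D k).sigma fun C => (C \ D) ×ˢ (D \ C)) =
      #(interLevel m D k) * ((m - k) * (#D - k)) := by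
    rw [card_sigma, sum_const_nat]
    intro C hC
    obtain ⟨hCm, hCk⟩ := mem_interLevel.1 hC
    rw [card_product, card_sdiff_eq_sub_of_card_inter hCm hCk,
      card_sdiff_eq_sub_of_card_inter (C := D) (k := k) rfl (by rwa [inter_comm])]
  have hup : #((interLevel m D (k + 1)).sigma fun C => (C ∩ D) ×ˢ (Dᶜ \ C)) =
      #(interLevel m D (k + 1)) * ((k + 1) * (#Dᶜ - (m - (k + 1)))) := by
    rw [card_sigma, sum_const_nat]
    intro C hC
    obtain ⟨hCm, hCk⟩ := mem_interLevel.1 hC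
    rw [card_product, hCk, card_sdiff, ← sdiff_eq_inter_compl,
      card_sdiff_eq_sub_of_card_inter hCm hCk]
  rw [← hdown, ← hup]
  refine card_le_card_of_injOn (fun p => ⟨insert p.2.2 (p.1.erase p.2.1), (p.2.2, p.2.1)⟩)
    ?_ ?_
  · rintro ⟨C, x, y⟩ hp
    simp only [coe_sigma, Set.mem_sigma_iff, mem_coe, mem_product, mem_sdiff] at hp
    obtain ⟨hC, ⟨hxC, hxD⟩, hyD, hyC⟩ := hp
    obtain ⟨hCm, hCk⟩ := mem_interLevel.1 hC
    have hy : y ∉ C.erase x := fun h => hyC (mem_of_mem_erase h)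
    have hinter : insert y (C.erase x) ∩ D = insert y (C ∩ D) := by
      rw [insert_inter_of_mem hyD, erase_inter,
        erase_eq_of_notMem fun h => hxD (mem_inter.1 h).2]
    simp only [coe_sigma, Set.mem_sigma_iff, mem_coe, mem_product, mem_sdiff, mem_inter,
      mem_compl, mem_interLevel, mem_insert, mem_erase]
    refine ⟨⟨?_, ?_⟩, ⟨by simp, hyD⟩, hxD, ?_⟩
    · rw [card_insert_of_notMem hy, card_erase_of_mem hxC, hCm]
      have := card_pos.2 ⟨x, hxC⟩
      omega
    · rw [hinter, card_insert_of_notMem (fun h => hyC (mem_inter.1 h).1), hCk]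
    · rintro (rfl | ⟨hne, -⟩)
      exacts [hxD hyD, hne rfl]
  · rintro ⟨C₁, x, y⟩ h₁ ⟨C₂, x', y'⟩ h₂ heq
    simp only [coe_sigma, Set.mem_sigma_iff, mem_coe, mem_product, mem_sdiff] at h₁ h₂
    simp only [Sigma.mk.inj_iff, heq_eq_eq, Prod.mk.injEq] at heq
    obtain ⟨hC, rfl, rfl⟩ := heq
    have hrecover : ∀ C : Finset V, x ∈ C → y ∉ C →
        insert x ((insert y (C.erase x)).erase y) = C := fun C hx hy => by
      rw [erase_insert fun h => hy (mem_of_mem_erase h), insert_erase hx]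
    rw [← hrecover C₁ h₁.2.1.1 h₁.2.2.2, ← hrecover C₂ h₂.2.1.1 h₂.2.2.2, hC]

theorem card_interLevel_le_mul_succ [Nonempty V] {m k : ℕ} {D : Finset V} {γ : ℝ}
    (hγ₀ : 0 ≤ γ) (hγ₁ : γ ≤ 1) (hm : m ≤ Fintype.card V)
    (hkey : ((k + 2) * Fintype.card V + γ * m * Fintype.card V : ℝ) ≤ #D * m) :
    (#(interLevel m D k) : ℝ) ≤ (1 - γ) * #(interLevel m D (k + 1)) := by
  set n := Fintype.card V
  have hn : (0 : ℝ) < n := by exact_mod_cast Fintype.card_pos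
  have hDn : #D ≤ n := card_le_univ D
  have hDnR : (#D : ℝ) ≤ n := by exact_mod_cast hDn
  have hmR : (m : ℝ) ≤ n := by exact_mod_cast hm
  have hγmn : 0 ≤ γ * m * n := by positivity
  have hkm : k + 2 ≤ m := by
    have : ((k : ℝ) + 2) * n ≤ m * n := by
      nlinarith [mul_le_mul_of_nonneg_right hDnR m.cast_nonneg]
    exact_mod_cast le_of_mul_le_mul_right this hn
  have hkD : k + 2 ≤ #D := by
    have : ((k : ℝ) + 2) * n ≤ #D * n := by
      nlinarith [mul_le_mul_of_nonneg_left hmR (#D).cast_nonneg]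
    exact_mod_cast le_of_mul_le_mul_right this hn
  have hcount := card_interLevel_mul_le m D k
  rw [card_compl] at hcount
  have hpos : (0 : ℝ) < ((m - k) * (#D - k) : ℕ) := by
    have : 0 < (m - k) * (#D - k) := Nat.mul_pos (by omega) (by omega)
    exact_mod_cast this
  rcases le_or_gt (m - (k + 1)) (n - #D) with hfit | hfit
  · have hratio : (((k + 1) * (n - #D - (m - (k + 1))) : ℕ) : ℝ) ≤
        (1 - γ) * ((m - k) * (#D - k) : ℕ) := by
      push_cast [Nat.cast_sub hfit, Nat.cast_sub hDn, Nat.cast_sub (by omega : k + 1 ≤ m),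
        Nat.cast_sub (by omega : k ≤ m), Nat.cast_sub (by omega : k ≤ #D)]
      have hkmR : (k : ℝ) + 2 ≤ m := by exact_mod_cast hkm
      nlinarith [mul_le_mul_of_nonneg_left hDnR (by positivity : 0 ≤ γ * m),
        mul_nonneg (mul_nonneg hγ₀ k.cast_nonneg) (by linarith : (0 : ℝ) ≤ m + #D - k)]
    refine le_of_mul_le_mul_right ?_ hpos
    calc (#(interLevel m D k) : ℝ) * ((m - k) * (#D - k) : ℕ)
        ≤ #(interLevel m D (k + 1)) * (((k + 1) * (n - #D - (m - (k + 1))) : ℕ) : ℝ) := by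
          exact_mod_cast hcount
      _ ≤ #(interLevel m D (k + 1)) * ((1 - γ) * ((m - k) * (#D - k) : ℕ)) := by
          gcongr
      _ = (1 - γ) * #(interLevel m D (k + 1)) * ((m - k) * (#D - k) : ℕ) := by ring
  · rw [Nat.sub_eq_zero_of_le hfit.le, mul_zero, mul_zero, Nat.le_zero, mul_eq_zero] at hcount
    rw [hcount.resolve_right (by exact_mod_cast hpos.ne'), Nat.cast_zero]
    exact mul_nonneg (by linarith) (Nat.cast_nonneg _)

theorem card_filter_card_inter_le_le [Nonempty V] {m a j : ℕ} {D : Finset V} {γ : ℝ}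
    (hγ₀ : 0 ≤ γ) (hγ₁ : γ ≤ 1) (hm : m ≤ Fintype.card V)
    (hkey : ((a + j + 2) * Fintype.card V + γ * m * Fintype.card V : ℝ) ≤ #D * m) :
    (#{C ∈ powersetCard m univ | #(C ∩ D) ≤ a} : ℝ) ≤
      Fintype.card V * (1 - γ) ^ j * #(powersetCard m (univ : Finset V)) := by
  set n := Fintype.card V
  set P : ℝ := (#(powersetCard m (univ : Finset V)) : ℝ)
  have hstep : ∀ k < a + j + 1,
      (#(interLevel m D k) : ℝ) ≤ (1 - γ) * #(interLevel m D (k + 1)) := by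
    intro k hk
    refine card_interLevel_le_mul_succ hγ₀ hγ₁ hm (le_trans ?_ hkey)
    have : (k : ℝ) ≤ a + j := by exact_mod_cast Nat.lt_succ_iff.1 hk
    nlinarith [(n.cast_nonneg : (0 : ℝ) ≤ n)]
  have hlevel : ∀ k ≤ a, (#(interLevel m D k) : ℝ) ≤ (1 - γ) ^ j * P := by
    intro k hk
    calc (#(interLevel m D k) : ℝ) ≤ (1 - γ) ^ (a + j + 1 - k) * P :=
          le_pow_mul_of_le_mul_succ (by linarith)
            (fun k => Nat.cast_le.2 (card_filter_le _ _)) hstep k (by omega)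
      _ ≤ (1 - γ) ^ j * P :=
          mul_le_mul_of_nonneg_right
            (pow_le_pow_of_le_one (by linarith) (by linarith) (by omega)) (Nat.cast_nonneg _)
  have ha : (a : ℝ) + 1 ≤ n := by
    have hn : (0 : ℝ) < n := by exact_mod_cast Fintype.card_pos
    have : ((a : ℝ) + 2) * n ≤ n * n := by
      nlinarith [mul_le_mul (by exact_mod_cast card_le_univ D : (#D : ℝ) ≤ n)
        (by exact_mod_cast hm : (m : ℝ) ≤ n) m.cast_nonneg n.cast_nonneg,
        (by positivity : 0 ≤ γ * m * n), (by positivity : (0 : ℝ) ≤ j * n)]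
    nlinarith
  have hsub : {C ∈ powersetCard m (univ : Finset V) | #(C ∩ D) ≤ a} ⊆
      (range (a + 1)).biUnion (interLevel m D) := by
    intro C hC
    rw [mem_filter] at hC
    exact mem_biUnion.2 ⟨#(C ∩ D), mem_range.2 (by omega), mem_filter.2 ⟨hC.1, rfl⟩⟩
  calc (#{C ∈ powersetCard m univ | #(C ∩ D) ≤ a} : ℝ)
      ≤ ∑ k ∈ range (a + 1), (#(interLevel m D k) : ℝ) := by
        exact_mod_cast (card_le_card hsub).trans card_biUnion_le
    _ ≤ (a + 1) * ((1 - γ) ^ j * P) := by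
        simpa using sum_le_card_nsmul _ _ _ fun k hk =>
          hlevel k (Nat.lt_succ_iff.1 (mem_range.1 hk))
    _ ≤ n * (1 - γ) ^ j * P := by
        rw [mul_assoc]
        gcongr

theorem exists_card_eq_forall_lt_card_inter [Nonempty V] {ι : Type*} [Fintype ι]
    (D : ι → Finset V) (a : ι → ℕ) {m j : ℕ} {γ : ℝ} (hγ₀ : 0 ≤ γ) (hγ₁ : γ ≤ 1)
    (hm : m ≤ Fintype.card V)
    (hkey : ∀ i, ((a i + j + 2) * Fintype.card V + γ * m * Fintype.card V : ℝ) ≤ #(D i) * m)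
    (hsmall : (Fintype.card ι * Fintype.card V * (1 - γ) ^ j : ℝ) < 1) :
    ∃ C : Finset V, #C = m ∧ ∀ i, a i < #(C ∩ D i) := by
  set P := powersetCard m (univ : Finset V)
  set bad := univ.biUnion fun i => {C ∈ P | #(C ∩ D i) ≤ a i}
  have hP : (0 : ℝ) < #P := by
    exact_mod_cast card_pos.2 (powersetCard_nonempty.2 (by simpa using hm))
  have hbad : (#bad : ℝ) < #P :=
    calc (#bad : ℝ) ≤ ∑ i, (#{C ∈ P | #(C ∩ D i) ≤ a i} : ℝ) := by
          exact_mod_cast card_biUnion_le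
      _ ≤ ∑ _i : ι, Fintype.card V * (1 - γ) ^ j * #P :=
          sum_le_sum fun i _ => card_filter_card_inter_le_le hγ₀ hγ₁ hm (hkey i)
      _ = (Fintype.card ι * Fintype.card V * (1 - γ) ^ j) * #P := by
          rw [sum_const, card_univ, nsmul_eq_mul]; ring
      _ < #P := mul_lt_of_lt_one_left hP hsmall
  obtain ⟨C, hCP, hCbad⟩ := exists_mem_notMem_of_card_lt_card (by exact_mod_cast hbad)
  refine ⟨C, mem_powersetCard_univ.1 hCP, fun i => not_le.1 fun hle => hCbad ?_⟩
  exact mem_biUnion.2 ⟨i, mem_univ i, mem_filter.2 ⟨hCP, hle⟩⟩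

end InterLevel

section StarFactor

variable {V : Type*} [Fintype V] [DecidableEq V] (G : SimpleGraph V) [DecidableRel G.Adj]

def IsCenterSet (r A : ℕ) (C : Finset V) : Prop :=
  ∀ v, A ≤ #(C ∩ G.neighborFinset v) ∧ r * A ≤ #(G.neighborFinset v \ C)

variable {G}

theorem exists_isCenterSet {r m A j : ℕ} {γ : ℝ} (hr : 1 ≤ r) (hγ₀ : 0 ≤ γ) (hγ₁ : γ ≤ 1)
    (hcard : Fintype.card V = (r + 1) * m) (hγm : 2 ≤ γ * m)
    (hA : (A : ℝ) ≤ (1 / 2 + γ) * m + 1) (hj : (j : ℝ) ≤ γ * m)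
    (hdeg : ∀ v, (1 / 2 + 4 * γ) * Fintype.card V ≤ G.degree v)
    (hsmall : 2 * (Fintype.card V : ℝ) ^ 2 * (1 - γ) ^ j < 1) :
    ∃ C : Finset V, #C = m ∧ IsCenterSet G r A C := by
  set n := Fintype.card V
  have hm : m ≤ n := by rw [hcard]; exact Nat.le_mul_of_pos_left m (by omega)
  have hnR : (n : ℝ) = (r + 1) * m := by rw [hcard]; push_cast; ring
  have hn : (0 : ℝ) ≤ n := n.cast_nonneg
  have : Nonempty V := Fintype.card_pos_iff.1 <| by
    have : (0 : ℝ) < m := by nlinarith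
    have : 0 < m := by exact_mod_cast this
    show 0 < n
    rw [hcard]; positivity
  have hlow : ∀ v,
      (((A - 1 : ℕ) + j + 2) * n + γ * m * n : ℝ) ≤ #(G.neighborFinset v) * m := by
    intro v
    have hA' : ((A - 1 : ℕ) : ℝ) ≤ (1 / 2 + γ) * m := by
      rcases Nat.eq_zero_or_pos A with rfl | hA0
      · simp only [zero_tsub, Nat.cast_zero]; positivity
      · rw [Nat.cast_sub hA0]; push_cast; linarith
    rw [G.card_neighborFinset_eq_degree]
    calc (((A - 1 : ℕ) + j + 2) * n + γ * m * n : ℝ)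
        = ((A - 1 : ℕ) + j + 2 + γ * m) * n := by ring
      _ ≤ ((1 / 2 + 4 * γ) * m) * n := by gcongr; linarith
      _ = ((1 / 2 + 4 * γ) * n) * m := by ring
      _ ≤ G.degree v * m := by gcongr; exact hdeg v
  have hup : ∀ v : {v // G.degree v < m + r * A},
      (((m + r * A - 1 - G.degree v : ℕ) + j + 2) * n + γ * m * n : ℝ) ≤
        #(G.neighborFinset v)ᶜ * m := by
    rintro ⟨v, hv⟩
    dsimp only
    have hvn : G.degree v ≤ n := (G.degree_lt_card_verts v).le
    rw [card_compl, G.card_neighborFinset_eq_degree, Nat.cast_sub hvn,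
      Nat.cast_sub (by omega), Nat.cast_sub (by omega)]
    push_cast
    have hrA : (r : ℝ) * A ≤ r * ((1 / 2 + γ) * m + 1) := by gcongr
    have hrγm : (r : ℝ) * 2 ≤ r * (γ * m) := by gcongr
    have hr1 : (1 : ℝ) ≤ r := by exact_mod_cast hr
    have hγmr : γ * m * 1 ≤ γ * m * r := by gcongr
    have hX : ((r * A + 1 + j + γ * m) : ℝ) ≤ (1 / 2 + 4 * γ) * r * m := by
      linear_combination hrA + hj + hrγm + hr1 + 2 * hγmr
    linear_combination mul_le_mul_of_nonneg_right hX hn +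
      mul_le_mul_of_nonneg_right (hdeg v) (by positivity : (0 : ℝ) ≤ r * m) -
      (G.degree v : ℝ) * hnR
  have hι : (Fintype.card (V ⊕ {v // G.degree v < m + r * A}) : ℝ) ≤ 2 * n := by
    rw [Fintype.card_sum, two_mul]
    exact_mod_cast Nat.add_le_add_left (Fintype.card_subtype_le _) n
  -- Where `m + r * A ≤ G.degree v`, every `C` has `r * A` neighbours of `v` outside it.
  obtain ⟨C, hCm, hC⟩ := exists_card_eq_forall_lt_card_inter
    (Sum.elim (fun v => G.neighborFinset v)
      fun v : {v // G.degree v < m + r * A} => (G.neighborFinset v.1)ᶜ)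
    (Sum.elim (fun _ => A - 1)
      fun v : {v // G.degree v < m + r * A} => m + r * A - 1 - G.degree v.1)
    hγ₀ hγ₁ hm (by rintro (v | v); exacts [hlow v, hup v]) <| by
      calc ((Fintype.card (V ⊕ {v // G.degree v < m + r * A}) : ℝ) * n * (1 - γ) ^ j)
          ≤ (2 * n) * n * (1 - γ) ^ j := by gcongr
        _ < 1 := by linarith
  refine ⟨C, hCm, fun v => ⟨?_, ?_⟩⟩
  · have := hC (.inl v)
    simp only [Sum.elim_inl] at this
    omega
  · have hN := card_sdiff_add_card_inter (G.neighborFinset v) C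
    have hC' := card_sdiff_add_card_inter C (G.neighborFinset v)
    rw [G.card_neighborFinset_eq_degree, inter_comm] at hN
    rw [hCm, sdiff_eq_inter_compl] at hC'
    by_cases hv : G.degree v < m + r * A
    · have := hC (.inr ⟨v, hv⟩)
      simp only [Sum.elim_inr] at this
      omega
    · have := card_le_card (inter_subset_left (s₁ := C) (s₂ := G.neighborFinset v))
      omega

theorem card_le_mul_card_biUnion_inter_neighborFinset {r A : ℕ} {C : Finset V}
    (hcard : #Cᶜ = r * #C) (hA : #C ≤ 2 * A) (hC : IsCenterSet G r A C)
    {s : Finset V} (hs : s ⊆ Cᶜ) :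
    #s ≤ r * #(s.biUnion fun ℓ => C ∩ G.neighborFinset ℓ) := by
  rcases s.eq_empty_or_nonempty with rfl | ⟨ℓ₀, hℓ₀⟩
  · simp
  by_cases hsA : #s ≤ r * A
  · have hB : A ≤ #(s.biUnion fun ℓ => C ∩ G.neighborFinset ℓ) :=
      (hC ℓ₀).1.trans <| card_le_card <|
        subset_biUnion_of_mem (fun ℓ => C ∩ G.neighborFinset ℓ) hℓ₀
    exact hsA.trans (Nat.mul_le_mul_left r hB)
  -- A large `s` meets the neighbourhood of every center, since each center has at least
  -- `r * A` neighbours among the `r * #C ≤ 2 * r * A` non-centers.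
  have hBC : (s.biUnion fun ℓ => C ∩ G.neighborFinset ℓ) = C := by
    refine (biUnion_subset.2 fun _ _ => inter_subset_left).antisymm fun c hc => ?_
    have hXC : G.neighborFinset c \ C ⊆ Cᶜ := fun x hx => mem_compl.2 (mem_sdiff.1 hx).2
    have hrC : r * #C ≤ 2 * (r * A) := by
      calc r * #C ≤ r * (2 * A) := Nat.mul_le_mul_left r hA
        _ = 2 * (r * A) := by ring
    obtain ⟨x, hx⟩ : (s ∩ (G.neighborFinset c \ C)).Nonempty := by
      rw [← card_pos]
      have := card_union_add_card_inter s (G.neighborFinset c \ C)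
      have := card_le_card (union_subset hs hXC)
      have := (hC c).2
      omega
    obtain ⟨hxs, hxX⟩ := mem_inter.1 hx
    have hcx : G.Adj x c := ((G.mem_neighborFinset c x).1 (mem_sdiff.1 hxX).1).symm
    exact mem_biUnion.2 ⟨x, hxs, mem_inter.2 ⟨hc, (G.mem_neighborFinset x c).2 hcx⟩⟩
  rw [hBC, ← hcard]
  exact card_le_card hs

theorem exists_starFactor_of_isCenterSet {r A : ℕ} {C : Finset V}
    (hcard : #Cᶜ = r * #C) (hA : #C ≤ 2 * A) (hC : IsCenterSet G r A C) :
    ∃ c : V → V, (∀ v, c (c v) = c v) ∧ (∀ v, c v ≠ v → G.Adj (c v) v) ∧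
      ∀ v, c v = v → #{u | c u = v ∧ u ≠ v} = r := by
  -- Hall's theorem, applied with every center split into `r` slots.
  obtain ⟨f, hf, hfmem⟩ := (all_card_le_biUnion_card_iff_exists_injective
      fun ℓ : ↥Cᶜ => (C ∩ G.neighborFinset ℓ.1) ×ˢ (univ : Finset (Fin r))).1 <| by
    intro s
    have hs := card_le_mul_card_biUnion_inter_neighborFinset hcard hA hC
      (s := s.map (Function.Embedding.subtype _)) fun x hx => by
        obtain ⟨ℓ, -, rfl⟩ := mem_map.1 hx
        exact ℓ.2
    have hslots :
        (s.biUnion fun ℓ => (C ∩ G.neighborFinset ℓ.1) ×ˢ (univ : Finset (Fin r))) =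
          (s.biUnion fun ℓ => C ∩ G.neighborFinset ℓ.1) ×ˢ univ := by
      ext; simp
    rw [card_map, map_eq_image, image_biUnion] at hs
    rw [hslots, card_product, card_univ, Fintype.card_fin, mul_comm]
    exact hs
  have hfC : ∀ ℓ, (f ℓ).1 ∈ C := fun ℓ => (mem_inter.1 (mem_product.1 (hfmem ℓ)).1).1
  have hfadj : ∀ ℓ, G.Adj (f ℓ).1 ℓ := fun ℓ =>
    ((G.mem_neighborFinset _ _).1 (mem_inter.1 (mem_product.1 (hfmem ℓ)).1).2).symm
  let c : V → V := fun v => if h : v ∈ C then v else (f ⟨v, mem_compl.2 h⟩).1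
  have hcC : ∀ v, c v ∈ C := fun v => by
    by_cases h : v ∈ C
    · simp [c, h]
    · simp [c, h, hfC]
  have hfix : ∀ v, c v = v ↔ v ∈ C := fun v => ⟨fun h => h ▸ hcC v, fun h => dif_pos h⟩
  have hfiber_le : ∀ w, #{ℓ | (f ℓ).1 = w} ≤ r := fun w => by
    simpa using card_le_card_of_injOn (fun ℓ => (f ℓ).2) (t := univ)
      (fun _ _ => mem_coe.2 (mem_univ _)) fun ℓ₁ h₁ ℓ₂ h₂ h =>
        hf (Prod.ext ((mem_filter.1 h₁).2.trans (mem_filter.1 h₂).2.symm) h)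
  -- At most `r` leaves per center and `r * #C` leaves in all: every center gets exactly `r`.
  have hfiber : ∀ w ∈ C, #{ℓ | (f ℓ).1 = w} = r := by
    refine (sum_eq_sum_iff_of_le fun w _ => hfiber_le w).1 ?_
    rw [← card_eq_sum_card_fiberwise fun ℓ _ => hfC ℓ, card_univ, Fintype.card_coe, hcard,
      sum_const, smul_eq_mul, mul_comm]
  refine ⟨c, fun v => (hfix _).2 (hcC v), fun v hv => ?_, fun w hw => ?_⟩
  · have hvC : v ∉ C := fun h => hv ((hfix v).2 h)
    simpa [c, hvC] using hfadj ⟨v, mem_compl.2 hvC⟩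
  · rw [← hfiber w ((hfix w).1 hw), ← card_map (Function.Embedding.subtype _)]
    congr 1
    ext u
    by_cases hu : u ∈ C
    · simp [c, hu]
    · simpa [c, hu] using fun _ (huw : u = w) => hu (huw ▸ (hfix w).1 hw)

end StarFactor

open Filter Topology Real in
theorem eventually_mul_sq_mul_one_sub_pow_floor_lt_one {γ : ℝ} (hγ₀ : 0 < γ) (hγ₁ : γ ≤ 1)
    {c : ℝ} (hc : 0 ≤ c) :
    ∀ᶠ m : ℕ in atTop, c * (m : ℝ) ^ 2 * (1 - γ) ^ ⌊γ * m⌋₊ < 1 := by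
  have hρ : |exp (-γ ^ 2)| < 1 := by
    rw [abs_of_pos (exp_pos _), exp_lt_one_iff]
    nlinarith
  have hlim : Tendsto (fun m : ℕ => c * exp γ * ((m : ℝ) ^ 2 * exp (-γ ^ 2) ^ m)) atTop (𝓝 0) :=
    by simpa using (tendsto_pow_const_mul_const_pow_of_abs_lt_one 2 hρ).const_mul (c * exp γ)
  filter_upwards [hlim.eventually (gt_mem_nhds one_pos)] with m hm
  have hdecay : (1 - γ) ^ ⌊γ * m⌋₊ ≤ exp γ * exp (-γ ^ 2) ^ m :=
    calc (1 - γ) ^ ⌊γ * m⌋₊ ≤ exp (-γ) ^ ⌊γ * m⌋₊ :=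
          pow_le_pow_left₀ (by linarith) (one_sub_le_exp_neg γ) _
      _ = exp (⌊γ * m⌋₊ * -γ) := (exp_nat_mul _ _).symm
      _ ≤ exp ((γ * m - 1) * -γ) := by
          have := Nat.lt_floor_add_one (γ * m)
          exact exp_le_exp.2 (by nlinarith)
      _ = exp γ * exp (-γ ^ 2) ^ m := by rw [← exp_nat_mul, ← exp_add]; ring_nf
  calc c * (m : ℝ) ^ 2 * (1 - γ) ^ ⌊γ * m⌋₊
      ≤ c * (m : ℝ) ^ 2 * (exp γ * exp (-γ ^ 2) ^ m) := by gcongr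
    _ = c * exp γ * ((m : ℝ) ^ 2 * exp (-γ ^ 2) ^ m) := by ring
    _ < 1 := hm

/-- For every positive integer `r` and `ε > 0` there is `n₀` such that every graph `G` on
`n ≥ n₀` vertices with minimum degree at least `(1/2 + ε)n`, where `(r+1) ∣ n`, contains a
`K_{1,r}`-factor.  The factor is encoded by a map `c` sending each vertex to the center of
its star: centers are fixed points, every non-center is adjacent to its center, and every
center has exactly `r` leaves. -/
theorem stmt_6 (r : ℕ) (hr : 1 ≤ r) (ε : ℝ) (hε : 0 < ε) :
    ∃ n₀ : ℕ, ∀ n : ℕ, n₀ ≤ n →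
      ∀ (V : Type) [Fintype V] [DecidableEq V] (G : SimpleGraph V) [DecidableRel G.Adj],
        Fintype.card V = n → (1 / 2 + ε) * n ≤ (G.minDegree : ℝ) → (r + 1) ∣ n →
        ∃ c : V → V,
          (∀ v : V, c (c v) = c v) ∧
          (∀ v : V, c v ≠ v → G.Adj (c v) v) ∧
          (∀ v : V, c v = v →
            (Finset.univ.filter fun u : V => c u = v ∧ u ≠ v).card = r) := by
  obtain ⟨γ, hγ₀, hγ₁, hγε⟩ : ∃ γ : ℝ, 0 < γ ∧ γ ≤ 1 ∧ 4 * γ ≤ ε :=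
    ⟨min ε 1 / 4, by positivity, by linarith [min_le_right ε 1], by linarith [min_le_left ε 1]⟩
  obtain ⟨M, hM⟩ := Filter.eventually_atTop.1 <|
    ((tendsto_natCast_atTop_atTop.const_mul_atTop hγ₀).eventually_ge_atTop 2).and
      (eventually_mul_sq_mul_one_sub_pow_floor_lt_one hγ₀ hγ₁ (c := 2 * (r + 1) ^ 2)
        (by positivity))
  refine ⟨(r + 1) * M, ?_⟩
  rintro n hn V _ _ G _ rfl hδ ⟨m, hm⟩
  obtain ⟨hγm, hsmall⟩ := hM m (Nat.le_of_mul_le_mul_left (hm ▸ hn) (by omega))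
  have hdeg : ∀ v, (1 / 2 + 4 * γ) * Fintype.card V ≤ G.degree v := fun v => by
    have : (G.minDegree : ℝ) ≤ G.degree v := by exact_mod_cast G.minDegree_le_degree v
    nlinarith [(Fintype.card V).cast_nonneg (α := ℝ)]
  set A := ⌈(1 / 2 + γ) * m⌉₊
  obtain ⟨C, hCm, hC⟩ := exists_isCenterSet (A := A) (j := ⌊γ * m⌋₊) hr hγ₀.le hγ₁ hm hγm
    (Nat.ceil_lt_add_one (by positivity)).le (Nat.floor_le (by positivity)) hdeg
    (by rw [hm]; push_cast; linarith)
  refine exists_starFactor_of_isCenterSet ?_ ?_ hC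
  · rw [card_compl, hCm, hm, add_mul, one_mul, Nat.add_sub_cancel]
  · have : (m : ℝ) ≤ 2 * A := by
      nlinarith [Nat.le_ceil ((1 / 2 + γ) * m), (m.cast_nonneg : (0 : ℝ) ≤ m)]
    rw [hCm]
    exact_mod_cast this
end

section
/- Let G_r be a graph on ℓ vertices with minimum degree δ(G_r) ≥ (2/3 − 14d)ℓ, where d > 0 is sufficiently small and ℓ is sufficiently large. Define the bipartite graph Λ_1 with parts V(G_r) and S = all unordered pairs of vertices of G_r, where W is joined to a pair {U,U'} iff W is adjacent to both U and U' in G_r. Then Λ_1 has a proportional matching: a set of edges in which every W ∈ V(G_r) is incident to exactly |S|/ℓ edges and every pair in S is incident to exactly one edge. -/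
open Finset

namespace proportional

variable {V : Type} [Fintype V] [DecidableEq V] (G : SimpleGraph V) [DecidableRel G.Adj]

def commonNbrs (s : Finset V) : Finset V :=
  Finset.univ.filter (fun w => ∀ v ∈ s, G.Adj w v)

lemma codeg_lower {s : Finset V} (hs : s.card = 2) :
    2 * G.minDegree ≤ (commonNbrs G s).card + Fintype.card V := by
  obtain ⟨u, v, huv, rfl⟩ := Finset.card_eq_two.mp hs
  have hsub : G.neighborFinset u ∩ G.neighborFinset v ⊆ commonNbrs G {u, v} := by
    intro w hw
    simp only [Finset.mem_inter, SimpleGraph.mem_neighborFinset] at hw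
    simp only [commonNbrs, Finset.mem_filter, Finset.mem_univ, true_and, Finset.mem_insert,
      Finset.mem_singleton]
    rintro z (rfl | rfl)
    · exact hw.1.symm
    · exact hw.2.symm
  have h1 : (G.neighborFinset u ∩ G.neighborFinset v).card
      + (G.neighborFinset u ∪ G.neighborFinset v).card
      = G.degree u + G.degree v := by
    rw [Finset.card_inter_add_card_union]; rfl
  have h2 : (G.neighborFinset u ∪ G.neighborFinset v).card ≤ Fintype.card V :=
    Finset.card_le_card (Finset.subset_univ _) |>.trans (by simp)
  have h3 := G.minDegree_le_degree u
  have h4 := G.minDegree_le_degree v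
  have h5 := Finset.card_le_card hsub
  omega

/-- few vertices have neighborhood disjoint from a nonempty X -/
lemma avoid_le {X : Finset V} (hX : X.Nonempty) :
    (Finset.univ.filter (fun v => X ∩ G.neighborFinset v = ∅)).card + G.minDegree
      ≤ Fintype.card V := by
  classical
  have key : ∑ v : V, (X ∩ G.neighborFinset v).card = ∑ x ∈ X, G.degree x := by
    have h1 : ∀ v : V, (X ∩ G.neighborFinset v).card
        = ∑ x ∈ X, if G.Adj v x then 1 else 0 := by
      intro v
      rw [← Finset.card_filter]
      congr 1
      ext x
      simp [SimpleGraph.mem_neighborFinset]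
    simp_rw [h1]
    rw [Finset.sum_comm]
    congr 1
    ext x
    rw [← Finset.card_filter]
    have : Finset.univ.filter (fun v => G.Adj v x) = G.neighborFinset x := by
      ext v; simp [SimpleGraph.mem_neighborFinset, G.adj_comm]
    rw [this]; rfl
  have hlow : X.card * G.minDegree ≤ ∑ x ∈ X, G.degree x := by
    calc X.card * G.minDegree = X.card • G.minDegree := by simp
    _ ≤ ∑ x ∈ X, G.degree x :=
      Finset.card_nsmul_le_sum _ _ _ (fun x _ => G.minDegree_le_degree x)
  have hsplit : ∑ v : V, (X ∩ G.neighborFinset v).card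
      = ∑ v ∈ Finset.univ.filter (fun v => X ∩ G.neighborFinset v = ∅), (X ∩ G.neighborFinset v).card
        + ∑ v ∈ Finset.univ.filter (fun v => ¬ (X ∩ G.neighborFinset v = ∅)), (X ∩ G.neighborFinset v).card :=
    (Finset.sum_filter_add_sum_filter_not _ (fun v => X ∩ G.neighborFinset v = ∅) _).symm
  have hz : ∑ v ∈ Finset.univ.filter (fun v => X ∩ G.neighborFinset v = ∅), (X ∩ G.neighborFinset v).card = 0 := by
    apply Finset.sum_eq_zero
    intro v hv
    rw [Finset.mem_filter] at hv
    rw [hv.2]; simp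
  have hup : ∑ v ∈ Finset.univ.filter (fun v => ¬ (X ∩ G.neighborFinset v = ∅)), (X ∩ G.neighborFinset v).card
      ≤ (Finset.univ.filter (fun v => ¬ (X ∩ G.neighborFinset v = ∅))).card * X.card := by
    calc _ ≤ (Finset.univ.filter (fun v => ¬ (X ∩ G.neighborFinset v = ∅))).card • X.card :=
          Finset.sum_le_card_nsmul _ _ _
            (fun v _ => Finset.card_le_card Finset.inter_subset_left)
    _ = _ := by simp
  have hXpos : 0 < X.card := Finset.card_pos.mpr hX
  have hδ : G.minDegree ≤ (Finset.univ.filter (fun v => ¬ (X ∩ G.neighborFinset v = ∅))).card := by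
    have : X.card * G.minDegree ≤ (Finset.univ.filter (fun v => ¬ (X ∩ G.neighborFinset v = ∅))).card * X.card := by
      omega
    rw [mul_comm] at this
    exact Nat.le_of_mul_le_mul_right this hXpos
  have hcards := Finset.card_filter_add_card_filter_not
    (s := (Finset.univ : Finset V)) (fun v => X ∩ G.neighborFinset v = ∅)
  rw [Finset.card_univ] at hcards
  omega


lemma fiber_le {B : Finset V} (hB : B.card < G.minDegree) {A : Finset (Finset V)}
    (hA2 : ∀ s ∈ A, s.card = 2) (hcn : ∀ s ∈ A, commonNbrs G s ⊆ B) (u : V) :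
    (A.filter (fun s => u ∈ s)).card + G.minDegree ≤ Fintype.card V := by
  classical
  set X : Finset V := G.neighborFinset u \ B with hXdef
  have hX : X.Nonempty := by
    rw [← Finset.card_pos]
    have h1 : G.degree u - B.card ≤ X.card := Finset.le_card_sdiff _ _
    have h2 := G.minDegree_le_degree u
    omega
  set Z := Finset.univ.filter (fun v => X ∩ G.neighborFinset v = ∅) with hZ
  have hZle := avoid_le G hX
  have hAle : (A.filter (fun s => u ∈ s)).card ≤ Z.card := by
    have himg : (A.filter (fun s => u ∈ s)).card
        = ((A.filter (fun s => u ∈ s)).image (fun s => s.erase u)).card := by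
      rw [Finset.card_image_of_injOn]
      intro s hs t ht hst
      rw [Finset.mem_coe, Finset.mem_filter] at hs ht
      rw [← Finset.insert_erase hs.2, ← Finset.insert_erase ht.2]
      exact congrArg (insert u) hst
    rw [himg]
    have hsub : (A.filter (fun s => u ∈ s)).image (fun s => s.erase u)
        ⊆ Z.image (fun v => {v}) := by
      intro e he
      rw [Finset.mem_image] at he
      obtain ⟨s, hs, rfl⟩ := he
      rw [Finset.mem_filter] at hs
      have hcard : (s.erase u).card = 1 := by
        rw [Finset.card_erase_of_mem hs.2, hA2 s hs.1]
      obtain ⟨v, hv⟩ := Finset.card_eq_one.mp hcard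
      rw [Finset.mem_image]
      refine ⟨v, ?_, hv.symm⟩
      rw [hZ, Finset.mem_filter]
      refine ⟨Finset.mem_univ _, ?_⟩
      by_contra hne
      obtain ⟨x, hx⟩ := Finset.nonempty_iff_ne_empty.mpr hne
      rw [Finset.mem_inter] at hx
      have hxX : x ∈ X := hx.1
      rw [hXdef, Finset.mem_sdiff, SimpleGraph.mem_neighborFinset] at hxX
      have hxv : G.Adj v x := (SimpleGraph.mem_neighborFinset _ _ _).mp hx.2
      have hxcn : x ∈ commonNbrs G s := by
        rw [commonNbrs, Finset.mem_filter]
        refine ⟨Finset.mem_univ _, ?_⟩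
        intro z hz
        have hseq : s = insert u (s.erase u) := (Finset.insert_erase hs.2).symm
        rw [hseq, Finset.mem_insert, hv, Finset.mem_singleton] at hz
        rcases hz with rfl | rfl
        · exact hxX.1.symm
        · exact hxv.symm
      exact hxX.2 (hcn s hs.1 hxcn)
    calc _ ≤ (Z.image (fun v => ({v} : Finset V))).card := Finset.card_le_card hsub
    _ ≤ Z.card := Finset.card_image_le
  rw [← hZ] at hZle
  omega


lemma choose_two_odd (r : ℕ) : (2*r+1).choose 2 = (2*r+1)*r := by
  rw [Nat.choose_two_right]
  have h1 : 2*r+1-1 = 2*r := by omega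
  rw [h1]
  have : (2*r+1)*(2*r) = ((2*r+1)*r)*2 := by ring
  rw [this, Nat.mul_div_cancel _ (by norm_num)]


lemma core {r : ℕ} (hn : Fintype.card V = 2*r+1) (hn1000 : 1000 ≤ Fintype.card V)
    (hδ : 1979 * Fintype.card V ≤ 3000 * G.minDegree)
    {A : Finset (Finset V)} (hA2 : ∀ s ∈ A, s.card = 2) {B : Finset V}
    (hB : ∀ s ∈ A, commonNbrs G s ⊆ B) : A.card ≤ B.card * r := by
  classical
  set n := Fintype.card V with hndef
  set δ := G.minDegree with hδdef
  -- δ < n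
  have hVne : Nonempty V := Fintype.card_pos_iff.mp (by omega)
  obtain ⟨v₀⟩ := hVne
  have hδn : δ < n := lt_of_le_of_lt (G.minDegree_le_degree v₀) (G.degree_lt_card_verts v₀)
  -- A consists of 2-subsets
  have hApairs : A.card ≤ n.choose 2 := by
    have hsub : A ⊆ Finset.univ.powersetCard 2 := by
      intro s hs
      rw [Finset.mem_powersetCard]
      exact ⟨Finset.subset_univ _, hA2 s hs⟩
    calc A.card ≤ (Finset.univ.powersetCard 2).card := Finset.card_le_card hsub
    _ = n.choose 2 := by rw [Finset.card_powersetCard, Finset.card_univ]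
  have hchoosen : n.choose 2 = n * r := by rw [hn]; exact choose_two_odd r
  rcases A.eq_empty_or_nonempty with rfl | ⟨s₀, hs₀⟩
  · simp
  have hb1 : 2*δ ≤ B.card + n := by
    have h1 := codeg_lower G (hA2 s₀ hs₀)
    have h2 := Finset.card_le_card (hB s₀ hs₀)
    omega
  by_cases hbn : n ≤ B.card
  · calc A.card ≤ n * r := by omega
    _ ≤ B.card * r := Nat.mul_le_mul_right r hbn
  push_neg at hbn
  -- there is a vertex outside B
  have hex : (Finset.univ \ B).Nonempty := by
    rw [← Finset.card_pos, Finset.card_sdiff_of_subset (Finset.subset_univ B), Finset.card_univ]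
    omega
  obtain ⟨x₀, hx₀'⟩ := hex
  have hx₀ : x₀ ∉ B := (Finset.mem_sdiff.mp hx₀').2
  have hnotsub : ∀ s ∈ A, ¬ (s ⊆ G.neighborFinset x₀) := by
    intro s hs hsub
    apply hx₀
    apply hB s hs
    rw [commonNbrs, Finset.mem_filter]
    refine ⟨Finset.mem_univ _, fun z hz => ?_⟩
    exact (SimpleGraph.mem_neighborFinset _ _ _).mp (hsub hz)
  by_cases hbδ : B.card < δ
  · -- vertex-cover + max-degree argument
    have hcover : A ⊆ (Finset.univ \ G.neighborFinset x₀).biUnion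
        (fun w => A.filter (fun s => w ∈ s)) := by
      intro s hs
      rw [Finset.mem_biUnion]
      have : ∃ w ∈ s, w ∉ G.neighborFinset x₀ := by
        by_contra hc
        push_neg at hc
        exact hnotsub s hs hc
      obtain ⟨w, hw1, hw2⟩ := this
      exact ⟨w, Finset.mem_sdiff.mpr ⟨Finset.mem_univ _, hw2⟩,
        Finset.mem_filter.mpr ⟨hs, hw1⟩⟩
    have hAcard : A.card ≤ (n - δ) * (n - δ) := by
      calc A.card ≤ ((Finset.univ \ G.neighborFinset x₀).biUnion
          (fun w => A.filter (fun s => w ∈ s))).card := Finset.card_le_card hcover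
      _ ≤ ∑ w ∈ Finset.univ \ G.neighborFinset x₀, (A.filter (fun s => w ∈ s)).card :=
          Finset.card_biUnion_le
      _ ≤ ∑ _w ∈ Finset.univ \ G.neighborFinset x₀, (n - δ) := by
          apply Finset.sum_le_sum
          intro w _
          have := fiber_le G hbδ hA2 hB w
          omega
      _ = (Finset.univ \ G.neighborFinset x₀).card * (n - δ) := by
          rw [Finset.sum_const, smul_eq_mul]
      _ ≤ (n - δ) * (n - δ) := by
          apply Nat.mul_le_mul_right
          rw [Finset.card_sdiff_of_subset (Finset.subset_univ _), Finset.card_univ]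
          have := G.minDegree_le_degree x₀
          have : G.degree x₀ = (G.neighborFinset x₀).card := rfl
          have := G.minDegree_le_degree x₀
          omega
    -- numeric step
    have h1 : 958 * (n - δ) ≤ 1021 * B.card := by omega
    have h2 : 1021 * (n - δ) ≤ 958 * r := by omega
    have h3 : 978118 * ((n-δ) * (n-δ)) ≤ 978118 * (B.card * r) := by
      calc 978118 * ((n-δ) * (n-δ)) = (1021 * (n-δ)) * (958 * (n-δ)) := by ring
      _ ≤ (958 * r) * (1021 * B.card) := Nat.mul_le_mul h2 h1
      _ = 978118 * (B.card * r) := by ring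
    have h4 : (n-δ) * (n-δ) ≤ B.card * r := Nat.le_of_mul_le_mul_left h3 (by norm_num)
    omega
  · -- δ ≤ B.card : pairs inside N(x₀) are excluded
    push_neg at hbδ
    have hδ1 : 659 ≤ δ := by omega
    have hdisj : Disjoint A ((G.neighborFinset x₀).powersetCard 2) := by
      rw [Finset.disjoint_left]
      intro s hs hs2
      exact hnotsub s hs (Finset.mem_powersetCard.mp hs2).1
    have hcards : A.card + (G.degree x₀).choose 2 ≤ n * r := by
      have hsub : A ∪ (G.neighborFinset x₀).powersetCard 2 ⊆ Finset.univ.powersetCard 2 := by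
        intro s hs
        rw [Finset.mem_union] at hs
        rw [Finset.mem_powersetCard]
        rcases hs with hs | hs
        · exact ⟨Finset.subset_univ _, hA2 s hs⟩
        · exact ⟨Finset.subset_univ _, (Finset.mem_powersetCard.mp hs).2⟩
      have := Finset.card_le_card hsub
      rw [Finset.card_union_of_disjoint hdisj, Finset.card_powersetCard,
        Finset.card_powersetCard, Finset.card_univ] at this
      calc A.card + (G.degree x₀).choose 2
          = A.card + ((G.neighborFinset x₀).card).choose 2 := rfl
      _ ≤ (Fintype.card V).choose 2 := this
      _ = n * r := by rw [← hndef, hchoosen]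
    have hmono : δ.choose 2 ≤ (G.degree x₀).choose 2 :=
      Nat.choose_le_choose 2 (G.minDegree_le_degree x₀)
    -- key inequality : n * r ≤ δ.choose 2 + δ * r
    have hc2 : 2 * Nat.choose δ 2 = δ * (δ - 1) := by
      rw [Nat.choose_two_right]
      have hev : 2 ∣ δ * (δ - 1) := by
        rcases Nat.even_or_odd δ with h | h
        · exact Dvd.dvd.mul_right h.two_dvd _
        · have he : Even (δ - 1) := by
            rcases h with ⟨k, hk⟩
            exact ⟨k, by omega⟩
          exact Dvd.dvd.mul_left he.two_dvd _
      omega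
    have hkey : n * r ≤ δ.choose 2 + δ * r := by
      -- reduces to 2*(n-δ)*r ≤ δ*(δ-1)
      have h1 : 3000 * (n - δ) ≤ 1979 * (δ - 1) := by omega
      have h2 : 1979 * (2 * r) ≤ 3000 * δ := by omega
      have h3 : 5937000 * ((n - δ) * (2 * r)) ≤ 5937000 * ((δ - 1) * δ) := by
        calc 5937000 * ((n - δ) * (2 * r)) = (3000 * (n - δ)) * (1979 * (2 * r)) := by ring
        _ ≤ (1979 * (δ - 1)) * (3000 * δ) := Nat.mul_le_mul h1 h2
        _ = 5937000 * ((δ - 1) * δ) := by ring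
      have h4 : (n - δ) * (2 * r) ≤ (δ - 1) * δ := Nat.le_of_mul_le_mul_left h3 (by norm_num)
      have h5 : n * r = δ * r + (n - δ) * r := by
        have : n = δ + (n - δ) := by omega
        calc n * r = (δ + (n - δ)) * r := by rw [← this]
        _ = δ * r + (n - δ) * r := by ring
      have h6 : 2 * ((n - δ) * r) = (n - δ) * (2 * r) := by ring
      have h7 : (δ - 1) * δ = 2 * Nat.choose δ 2 := by rw [hc2]; ring
      omega
    have hBr : δ * r ≤ B.card * r := Nat.mul_le_mul_right r hbδ
    omega

lemma main {r : ℕ} (hn : Fintype.card V = 2*r+1) (hn1000 : 1000 ≤ Fintype.card V)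
    (hδ : 1979 * Fintype.card V ≤ 3000 * G.minDegree) :
    ∃ M : Finset (V × Finset V),
      (∀ p ∈ M, p.2.card = 2 ∧ ∀ u ∈ p.2, G.Adj p.1 u) ∧
      (∀ W : V, (M.filter fun p => p.1 = W).card = r) ∧
      (∀ s : Finset V, s.card = 2 → (M.filter fun p => p.2 = s).card = 1) := by
  classical
  set ι := {s : Finset V // s.card = 2} with hι
  let t : ι → Finset (V × Fin r) := fun s => (commonNbrs G s.1) ×ˢ Finset.univ
  have hall : ∀ (A : Finset ι), A.card ≤ (A.biUnion t).card := by
    intro A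
    set A' : Finset (Finset V) := A.image (fun s => s.1) with hA'
    have hA'card : A'.card = A.card :=
      Finset.card_image_of_injective _ Subtype.val_injective
    set B : Finset V := A'.biUnion (fun s => commonNbrs G s) with hBdef
    have hA2 : ∀ s ∈ A', s.card = 2 := by
      intro s hs
      obtain ⟨s', _, rfl⟩ := Finset.mem_image.mp hs
      exact s'.2
    have hBss : ∀ s ∈ A', commonNbrs G s ⊆ B := by
      intro s hs
      exact Finset.subset_biUnion_of_mem _ hs
    have h1 : A'.card ≤ B.card * r := core G hn hn1000 hδ hA2 hBss
    have h2 : A.biUnion t = B ×ˢ (Finset.univ : Finset (Fin r)) := by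
      ext p
      rw [Finset.mem_biUnion, Finset.mem_product]
      constructor
      · rintro ⟨s, hs, hp⟩
        rw [Finset.mem_product] at hp
        refine ⟨?_, Finset.mem_univ _⟩
        rw [hBdef, Finset.mem_biUnion]
        exact ⟨s.1, Finset.mem_image.mpr ⟨s, hs, rfl⟩, hp.1⟩
      · rintro ⟨hp, -⟩
        rw [hBdef, Finset.mem_biUnion] at hp
        obtain ⟨s, hs, hps⟩ := hp
        obtain ⟨s', hs', rfl⟩ := Finset.mem_image.mp hs
        exact ⟨s', hs', Finset.mem_product.mpr ⟨hps, Finset.mem_univ _⟩⟩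
    rw [h2, Finset.card_product, Finset.card_univ, Fintype.card_fin]
    omega
  obtain ⟨f, hfinj, hft⟩ := (Finset.all_card_le_biUnion_card_iff_exists_injective t).mp hall
  have hfmem : ∀ s : ι, (f s).1 ∈ commonNbrs G s.1 :=
    fun s => (Finset.mem_product.mp (hft s)).1
  set M : Finset (V × Finset V) :=
    Finset.univ.image (fun s : ι => ((f s).1, s.1)) with hM
  have hginj : Function.Injective (fun s : ι => ((f s).1, s.1)) := by
    intro a b hab
    exact Subtype.ext (congrArg Prod.snd hab)
  refine ⟨M, ?_, ?_, ?_⟩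
  · -- membership properties
    intro p hp
    obtain ⟨s, -, rfl⟩ := Finset.mem_image.mp hp
    refine ⟨s.2, fun u hu => ?_⟩
    have := hfmem s
    rw [commonNbrs, Finset.mem_filter] at this
    exact this.2 u hu
  · -- each vertex in exactly r pairs
    have hMcard : M.card = (2*r+1) * r := by
      rw [hM, Finset.card_image_of_injective _ hginj, Finset.card_univ]
      have : Fintype.card ι = (Fintype.card V).choose 2 := Fintype.card_finset_len 2
      rw [this, hn, choose_two_odd]
    have hsum : ∑ W : V, (M.filter fun p => p.1 = W).card = M.card :=
      (Finset.card_eq_sum_card_fiberwise (fun p _ => Finset.mem_univ p.1)).symm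
    have hle : ∀ W : V, (M.filter fun p => p.1 = W).card ≤ r := by
      intro W
      set S := Finset.univ.filter (fun s : ι => (f s).1 = W) with hS
      have hsub : M.filter (fun p => p.1 = W) ⊆ S.image (fun s : ι => ((f s).1, s.1)) := by
        intro p hp
        rw [Finset.mem_filter] at hp
        obtain ⟨s, -, rfl⟩ := Finset.mem_image.mp hp.1
        exact Finset.mem_image.mpr ⟨s,
          Finset.mem_filter.mpr ⟨Finset.mem_univ _, hp.2⟩, rfl⟩
      have hScard : S.card ≤ r := by
        have : S.card ≤ (Finset.univ : Finset (Fin r)).card := by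
          apply Finset.card_le_card_of_injOn (fun s => (f s).2)
          · intro s _; exact Finset.mem_univ _
          · intro a ha b hb hab
            rw [Finset.mem_coe, hS, Finset.mem_filter] at ha hb
            apply hfinj
            apply Prod.ext
            · rw [ha.2, hb.2]
            · exact hab
        rwa [Finset.card_univ, Fintype.card_fin] at this
      calc (M.filter fun p => p.1 = W).card
          ≤ (S.image (fun s : ι => ((f s).1, s.1))).card := Finset.card_le_card hsub
      _ ≤ S.card := Finset.card_image_le
      _ ≤ r := hScard
    intro W
    by_contra hne
    have hlt : (M.filter fun p => p.1 = W).card < r :=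
      lt_of_le_of_ne (hle W) hne
    have hrest : ∑ W' ∈ Finset.univ.erase W, (M.filter fun p => p.1 = W').card
        ≤ (Finset.univ.erase W).card * r := by
      calc _ ≤ (Finset.univ.erase W).card • r :=
            Finset.sum_le_card_nsmul _ _ _ (fun W' _ => hle W')
      _ = _ := by simp
    have hsplit : ∑ W' ∈ Finset.univ.erase W, (M.filter fun p => p.1 = W').card
        + (M.filter fun p => p.1 = W).card = ∑ W' : V, (M.filter fun p => p.1 = W').card :=
      Finset.sum_erase_add _ _ (Finset.mem_univ W)
    have hcerase : (Finset.univ.erase W).card = 2*r := by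
      rw [Finset.card_erase_of_mem (Finset.mem_univ W), Finset.card_univ, hn]
      omega
    have h1 : M.card ≤ 2*r*r + (M.filter fun p => p.1 = W).card := by
      rw [← hsum, ← hsplit]
      refine Nat.add_le_add_right ?_ _
      rw [hcerase] at hrest
      exact hrest
    have h2 : (2*r+1)*r = 2*r*r + r := by ring
    rw [hMcard, h2] at h1
    omega
  · -- each pair exactly once
    intro s hs
    have h1 : M.filter (fun p => p.2 = s) = {((f ⟨s, hs⟩).1, s)} := by
      ext p
      rw [Finset.mem_filter, Finset.mem_singleton]
      constructor
      · rintro ⟨hp, hp2⟩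
        obtain ⟨s', -, rfl⟩ := Finset.mem_image.mp hp
        have : s' = ⟨s, hs⟩ := Subtype.ext hp2
        rw [this]
      · rintro rfl
        exact ⟨Finset.mem_image.mpr ⟨⟨s, hs⟩, Finset.mem_univ _, rfl⟩, rfl⟩
    rw [h1, Finset.card_singleton]


end proportional

/-- For sufficiently small `d > 0` and sufficiently large odd `ℓ`: if `G` is a graph on `ℓ`
vertices with minimum degree at least `(2/3 − 14d)ℓ`, then the bipartite graph `Λ₁`, whose
parts are `V(G)` and the unordered pairs of vertices of `G` (a vertex `W` being joined to a
pair iff `W` is adjacent to both of its elements), has a proportional matching: every vertex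
`W` is incident to exactly `(ℓ−1)/2` matching edges and every pair to exactly one. -/
theorem stmt_10 :
    ∃ d₀ : ℝ, 0 < d₀ ∧ ∃ ℓ₀ : ℕ, ∀ d : ℝ, 0 < d → d < d₀ → ∀ ℓ : ℕ, ℓ₀ ≤ ℓ → Odd ℓ →
      ∀ (V : Type) [Fintype V] [DecidableEq V] (G : SimpleGraph V) [DecidableRel G.Adj],
        Fintype.card V = ℓ → (2 / 3 - 14 * d) * ℓ ≤ (G.minDegree : ℝ) →
        ∃ M : Finset (V × Finset V),
          (∀ p ∈ M, p.2.card = 2 ∧ ∀ u ∈ p.2, G.Adj p.1 u) ∧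
          (∀ W : V, (M.filter fun p => p.1 = W).card = (ℓ - 1) / 2) ∧
          (∀ s : Finset V, s.card = 2 → (M.filter fun p => p.2 = s).card = 1) := by
  refine ⟨1/2000, by norm_num, 1000, ?_⟩
  intro d hd0 hd ℓ hℓ hodd V _ _ G _ hcard hmin
  obtain ⟨r, hr⟩ : ∃ r, ℓ = 2*r+1 := by
    rcases hodd with ⟨k, hk⟩
    exact ⟨k, by omega⟩
  have hnum : 1979 * Fintype.card V ≤ 3000 * G.minDegree := by
    rw [hcard]
    have hℓ0 : (0:ℝ) ≤ (ℓ:ℝ) := Nat.cast_nonneg ℓ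
    have h1 : (1979/3000 : ℝ) * ℓ ≤ (G.minDegree : ℝ) := by
      refine le_trans ?_ hmin
      apply mul_le_mul_of_nonneg_right _ hℓ0
      nlinarith
    have h2 : (1979:ℝ) * (ℓ:ℝ) ≤ 3000 * (G.minDegree:ℝ) := by nlinarith
    exact_mod_cast h2
  obtain ⟨M, hM1, hM2, hM3⟩ := proportional.main G (by rw [hcard, hr]) (by omega) hnum
  refine ⟨M, hM1, ?_, hM3⟩
  intro W
  have h2 : (ℓ - 1) / 2 = r := by omega
  rw [h2]
  exact hM2 W
end

section
/- Let H be a graph on n vertices with Ore-degree θ(H) ≤ 5 that is ν-triangular extreme (contains at least (1−ν)n/3 vertex-disjoint triangles). Let V_Δ be the set of vertices belonging to a triangle all of whose vertices have degree exactly 2 in H. Then |V_Δ| ≥ (1 − 7ν)n. -/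
lemma two_others_aux {V : Type*} [DecidableEq V] {s : Finset V} (h3 : s.card = 3) {x : V}
    (hx : x ∈ s) : ∃ y z, y ∈ s ∧ z ∈ s ∧ y ≠ x ∧ z ≠ x ∧ y ≠ z := by
  have h2 : (s.erase x).card = 2 := by
    rw [Finset.card_erase_of_mem hx, h3]
  obtain ⟨y, z, hyz, hs⟩ := Finset.card_eq_two.mp h2
  have hy : y ∈ s.erase x := by rw [hs]; simp
  have hz : z ∈ s.erase x := by rw [hs]; simp
  exact ⟨y, z, Finset.mem_of_mem_erase hy, Finset.mem_of_mem_erase hz,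
    Finset.ne_of_mem_erase hy, Finset.ne_of_mem_erase hz, hyz⟩

/-- If `H` is a graph on `n` vertices with `θ(H) ≤ 5` that is ν-triangular extreme
(it contains at least `(1−ν)n/3` pairwise vertex-disjoint triangles), and `V_Δ` is the set
of vertices lying in a triangle all of whose vertices have degree exactly 2, then
`|V_Δ| ≥ (1 − 7ν)n`. -/
theorem stmt_13 {V : Type*} [Fintype V] [DecidableEq V] (ν : ℝ) (hν : 0 < ν)
    (H : SimpleGraph V) [DecidableRel H.Adj]
    (hθ : ∀ x y : V, H.Adj x y → H.degree x + H.degree y ≤ 5)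
    (hext : ∃ t : Finset (Finset V),
      (∀ s ∈ t, s.card = 3 ∧ ∀ x ∈ s, ∀ y ∈ s, x ≠ y → H.Adj x y) ∧
      (t : Set (Finset V)).Pairwise (fun a b => Disjoint a b) ∧
      (1 - ν) * (Fintype.card V : ℝ) ≤ 3 * t.card) :
    (1 - 7 * ν) * (Fintype.card V : ℝ) ≤
      ({x : V | ∃ y z : V, H.Adj x y ∧ H.Adj x z ∧ H.Adj y z ∧
        H.degree x = 2 ∧ H.degree y = 2 ∧ H.degree z = 2} : Set V).ncard := by
  classical
  obtain ⟨t, htri, hdisj, hcount⟩ := hext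
  set S : Set V := {x : V | ∃ y z : V, H.Adj x y ∧ H.Adj x z ∧ H.Adj y z ∧
        H.degree x = 2 ∧ H.degree y = 2 ∧ H.degree z = 2} with hS
  set n := Fintype.card V with hn
  -- every vertex of a triangle in t has degree ≥ 2
  have hdeg2 : ∀ s ∈ t, ∀ x ∈ s, 2 ≤ H.degree x := by
    intro s hs x hx
    obtain ⟨h3, hadj⟩ := htri s hs
    obtain ⟨y, z, hy, hz, hyx, hzx, hyz⟩ := two_others_aux h3 hx
    have hsub : ({y, z} : Finset V) ⊆ H.neighborFinset x := by
      intro w hw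
      rw [SimpleGraph.mem_neighborFinset]
      rcases Finset.mem_insert.mp hw with h | h
      · rw [h]; exact hadj x hx y hy hyx.symm
      · rw [Finset.mem_singleton.mp h]; exact hadj x hx z hz hzx.symm
    have := Finset.card_le_card hsub
    rwa [Finset.card_pair hyz, SimpleGraph.card_neighborFinset_eq_degree] at this
  have hdeg3 : ∀ s ∈ t, ∀ x ∈ s, H.degree x ≤ 3 := by
    intro s hs x hx
    obtain ⟨h3, hadj⟩ := htri s hs
    obtain ⟨y, _, hy, _, hyx, _, _⟩ := two_others_aux h3 hx
    have h1 := hθ x y (hadj x hx y hy hyx.symm)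
    have h2 := hdeg2 s hs y hy
    omega
  set covered := t.biUnion id with hcov
  have hcovcard : covered.card = 3 * t.card := by
    have h := Finset.card_biUnion (s := t) (t := (id : Finset V → Finset V))
      (fun a ha b hb hab => hdisj ha hb hab)
    rw [hcov, h]
    have h2 : ∀ s ∈ t, (id s).card = 3 := fun s hs => (htri s hs).1
    rw [Finset.sum_congr rfl h2, Finset.sum_const, smul_eq_mul, mul_comm]
  have h3k : 3 * t.card ≤ n := hcovcard ▸ Finset.card_le_univ covered
  set good := t.filter (fun s => ∀ x ∈ s, H.degree x = 2) with hgood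
  set bad := t.filter (fun s => ¬ ∀ x ∈ s, H.degree x = 2) with hbad
  have hgb : good.card + bad.card = t.card := Finset.card_filter_add_card_filter_not _
  set uncov := Finset.univ \ covered with huncov
  have huncovcard : uncov.card = n - 3 * t.card := by
    rw [huncov, Finset.card_sdiff_of_subset (Finset.subset_univ _), hcovcard, Finset.card_univ]
  -- key witness lemma
  have key : ∀ s ∈ bad, ∃ x w, x ∈ s ∧ H.Adj w x ∧ w ∈ uncov ∧ H.degree w ≤ 2 := by
    intro s hs
    rw [hbad, Finset.mem_filter] at hs
    obtain ⟨hst, hnall⟩ := hs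
    push_neg at hnall
    obtain ⟨x, hx, hxne⟩ := hnall
    have hx3 : H.degree x = 3 := by
      have := hdeg2 s hst x hx; have := hdeg3 s hst x hx; omega
    -- find a neighbor of x outside s
    have hw : ∃ w, w ∈ H.neighborFinset x ∧ w ∉ s := by
      by_contra hc
      push_neg at hc
      have hsub : H.neighborFinset x ⊆ s.erase x := by
        intro w hw
        refine Finset.mem_erase.mpr ⟨?_, hc w hw⟩
        intro hwx
        exact H.irrefl (hwx ▸ (SimpleGraph.mem_neighborFinset H x w).mp hw)
      have := Finset.card_le_card hsub
      rw [SimpleGraph.card_neighborFinset_eq_degree, hx3,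
        Finset.card_erase_of_mem hx, (htri s hst).1] at this
      omega
    obtain ⟨w, hwnbr, hws⟩ := hw
    have hadjxw : H.Adj x w := (SimpleGraph.mem_neighborFinset H x w).mp hwnbr
    have hwdeg : H.degree w ≤ 2 := by
      have := hθ x w hadjxw; omega
    refine ⟨x, w, hx, hadjxw.symm, ?_, hwdeg⟩
    rw [huncov, Finset.mem_sdiff]
    refine ⟨Finset.mem_univ _, ?_⟩
    intro hwc
    rw [hcov, Finset.mem_biUnion] at hwc
    obtain ⟨s', hs't, hws'⟩ := hwc
    have hne : s' ≠ s := fun h => hws (h ▸ hws')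
    have hdisj' : Disjoint s' s := hdisj hs't hst hne
    have hxns' : x ∉ s' := fun h => (Finset.disjoint_left.mp hdisj' h) hx
    obtain ⟨h3', hadj'⟩ := htri s' hs't
    obtain ⟨y', z', hy', hz', hy'w, hz'w, hy'z'⟩ := two_others_aux h3' hws'
    have hsub : ({x, y', z'} : Finset V) ⊆ H.neighborFinset w := by
      intro u hu
      rw [SimpleGraph.mem_neighborFinset]
      rcases Finset.mem_insert.mp hu with h | h
      · exact h ▸ hadjxw.symm
      · rcases Finset.mem_insert.mp h with h' | h'
        · exact h' ▸ (hadj' y' hy' w hws' hy'w).symm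
        · exact (Finset.mem_singleton.mp h') ▸ (hadj' z' hz' w hws' hz'w).symm
    have hxy' : x ≠ y' := fun h => hxns' (by rw [h]; exact hy')
    have hxz' : x ≠ z' := fun h => hxns' (by rw [h]; exact hz')
    have hc3 : ({x, y', z'} : Finset V).card = 3 :=
      Finset.card_eq_three.mpr ⟨x, y', z', hxy', hxz', hy'z', rfl⟩
    have := Finset.card_le_card hsub
    rw [hc3, SimpleGraph.card_neighborFinset_eq_degree] at this
    omega
  -- bound on bad triangles
  have hbadcard : bad.card ≤ 2 * uncov.card := by
    rcases isEmpty_or_nonempty V with hV | hV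
    · have : bad.card = 0 := by
        rw [Finset.card_eq_zero]
        by_contra hne
        obtain ⟨s, hs⟩ := Finset.nonempty_iff_ne_empty.mpr hne
        obtain ⟨x, w, hx, _, _, _⟩ := key s hs
        exact hV.elim w
      omega
    · inhabit V
      choose xf wf hxf hadjf hwf hdegf using key
      set F : Finset V → V := fun s => if h : s ∈ bad then wf s h else default with hF
      set X : Finset V → V := fun s => if h : s ∈ bad then xf s h else default with hX
      have maps : ∀ s ∈ bad, F s ∈ uncov := by
        intro s hs; simp only [hF, dif_pos hs]; exact hwf s hs
      refine Finset.card_le_mul_card_image_of_maps_to maps 2 ?_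
      intro u _
      have hinj : Set.InjOn X ↑(bad.filter (fun s => F s = u)) := by
        intro s1 hs1 s2 hs2 heq
        simp only [Finset.coe_filter, Set.mem_setOf_eq] at hs1 hs2
        by_contra hne
        have hd := hdisj (Finset.mem_filter.mp hs1.1).1 (Finset.mem_filter.mp hs2.1).1
          (by exact_mod_cast hne)
        have h1 : X s1 ∈ s1 := by simp only [hX, dif_pos hs1.1]; exact hxf s1 hs1.1
        have h2 : X s2 ∈ s2 := by simp only [hX, dif_pos hs2.1]; exact hxf s2 hs2.1
        exact (Finset.disjoint_left.mp hd h1) (heq ▸ h2)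
      have hmaps2 : ∀ s ∈ bad.filter (fun s => F s = u), X s ∈ H.neighborFinset u := by
        intro s hs
        obtain ⟨hsb, hFu⟩ := Finset.mem_filter.mp hs
        rw [SimpleGraph.mem_neighborFinset]
        have := hadjf s hsb
        simp only [hX, dif_pos hsb]
        have : H.Adj (wf s hsb) (xf s hsb) := hadjf s hsb
        rw [show wf s hsb = u from by simpa [hF, dif_pos hsb] using hFu] at this
        exact this
      have := Finset.card_le_card_of_injOn X hmaps2 hinj
      rw [SimpleGraph.card_neighborFinset_eq_degree] at this
      -- degree of u ≤ 2 : need u to be an F-image; get from some s in the fiber, else trivial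
      rcases Finset.eq_empty_or_nonempty (bad.filter (fun s => F s = u)) with he | ⟨s, hs⟩
      · rw [he]; simp
      · obtain ⟨hsb, hFu⟩ := Finset.mem_filter.mp hs
        have hu2 : H.degree u ≤ 2 := by
          rw [show u = wf s hsb from by simpa [hF, dif_pos hsb] using hFu.symm]
          exact hdegf s hsb
        omega
  -- good triangles land in S
  have hgoodS : ↑(good.biUnion id) ⊆ S := by
    intro x hx
    rw [Finset.mem_coe, Finset.mem_biUnion] at hx
    obtain ⟨s, hs, hxs⟩ := hx
    rw [hgood, Finset.mem_filter] at hs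
    obtain ⟨hst, hall⟩ := hs
    obtain ⟨h3, hadj⟩ := htri s hst
    obtain ⟨y, z, hy, hz, hyx, hzx, hyz⟩ := two_others_aux h3 hxs
    exact ⟨y, z, hadj x hxs y hy hyx.symm, hadj x hxs z hz hzx.symm, hadj y hy z hz hyz,
      hall x hxs, hall y hy, hall z hz⟩
  have hgoodcard : (good.biUnion id).card = 3 * good.card := by
    have h := Finset.card_biUnion (s := good) (t := (id : Finset V → Finset V))
      (fun a ha b hb hab =>
        hdisj (Finset.mem_filter.mp ha).1 (Finset.mem_filter.mp hb).1 hab)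
    rw [h]
    have h2 : ∀ s ∈ good, (id s).card = 3 :=
      fun s hs => (htri s (Finset.mem_filter.mp hs).1).1
    rw [Finset.sum_congr rfl h2, Finset.sum_const, smul_eq_mul, mul_comm]
  have hSge : 3 * good.card ≤ S.ncard := by
    have := Set.ncard_le_ncard hgoodS (Set.toFinite S)
    rwa [Set.ncard_coe_finset, hgoodcard] at this
  -- arithmetic
  rw [huncovcard] at hbadcard
  have hk := t.card
  have cast1 : (bad.card : ℝ) ≤ 2 * ((n : ℝ) - 3 * t.card) := by
    have : (bad.card : ℝ) ≤ 2 * ((n - 3 * t.card : ℕ) : ℝ) := by exact_mod_cast hbadcard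
    rwa [Nat.cast_sub h3k, Nat.cast_mul, Nat.cast_ofNat] at this
  have cast2 : (3 : ℝ) * good.card ≤ (S.ncard : ℝ) := by exact_mod_cast hSge
  have cast3 : (good.card : ℝ) + bad.card = t.card := by exact_mod_cast hgb
  nlinarith [hcount, cast1, cast2, cast3]
end

section
/- Let G be a graph on n vertices with minimum degree δ(G) ≥ 2n/3, with A ⊆ V(G), |A| = ⌊n/3⌋, e(G[A]) ≤ ηn²/18, and B = V(G) − A. Define A' = {v ∈ A : deg(v,B) < 4n/9} and B' = {v ∈ B : deg(v,A) < 2n/9}. If the partition (A,B) maximizes e(G[A,B]) over single-vertex swaps (for all u ∈ A, v ∈ B: deg(u,A)+deg(v,B) ≤ deg(u,B)+deg(v,A)), then A' and B' cannot both be nonempty. -/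
lemma deg_split {V : Type*} [Fintype V] [DecidableEq V] (G : SimpleGraph V)
    [DecidableRel G.Adj] (A : Finset V) (u : V) :
    G.degree u = (A.filter (G.Adj u ·)).card + (Aᶜ.filter (G.Adj u ·)).card := by
  rw [← SimpleGraph.card_neighborFinset_eq_degree, SimpleGraph.neighborFinset,
    ← Finset.card_union_of_disjoint (by
      exact Finset.disjoint_filter_filter (disjoint_compl_right)),
    ← Finset.filter_union, Finset.union_compl]
  congr 1
  ext x
  simp [Set.mem_toFinset, SimpleGraph.mem_neighborSet]

/-- Let `G` be a graph on `n` vertices with `δ(G) ≥ 2n/3`, `A` a set of `⌊n/3⌋` vertices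
with `e(G[A]) ≤ ηn²/18`, `B = V(G) − A`, and let
`A' = {v ∈ A : deg(v,B) < 4n/9}`, `B' = {v ∈ B : deg(v,A) < 2n/9}`.  If the partition
`(A,B)` maximizes the number of crossing edges over single-vertex swaps, then `A'` and `B'`
cannot both be nonempty. -/
theorem stmt_16 {V : Type*} [Fintype V] [DecidableEq V] (n : ℕ) (hn : Fintype.card V = n)
    (η : ℝ) (hη : 0 ≤ η) (G : SimpleGraph V) [DecidableRel G.Adj]
    (hδ : 2 * (n : ℝ) / 3 ≤ G.minDegree)
    (A : Finset V) (hA : A.card = n / 3)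
    (hAe : ((G.edgeFinset.filter fun e => ∀ v ∈ e, v ∈ A).card : ℝ) ≤ η * n ^ 2 / 18)
    (hswitch : ∀ u ∈ A, ∀ v ∈ Aᶜ,
      (A.filter (G.Adj u ·)).card + (Aᶜ.filter (G.Adj v ·)).card ≤
        (Aᶜ.filter (G.Adj u ·)).card + (A.filter (G.Adj v ·)).card) :
    ¬ ((A.filter fun v => ((Aᶜ.filter (G.Adj v ·)).card : ℝ) < 4 * n / 9).Nonempty ∧
       (Aᶜ.filter fun v => ((A.filter (G.Adj v ·)).card : ℝ) < 2 * n / 9).Nonempty) := by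
  rintro ⟨⟨u, hu⟩, ⟨v, hv⟩⟩
  rw [Finset.mem_filter] at hu hv
  obtain ⟨huA, huB⟩ := hu
  obtain ⟨hvB, hvA⟩ := hv
  have hsw := hswitch u huA v hvB
  have hdu : 2 * (n : ℝ) / 3 ≤ G.degree u := le_trans hδ (by
    exact_mod_cast G.minDegree_le_degree u)
  have hdv : 2 * (n : ℝ) / 3 ≤ G.degree v := le_trans hδ (by
    exact_mod_cast G.minDegree_le_degree v)
  have h1 := deg_split G A u
  have h2 := deg_split G A v
  have hsw' : ((A.filter (G.Adj u ·)).card : ℝ) + (Aᶜ.filter (G.Adj v ·)).card ≤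
      ((Aᶜ.filter (G.Adj u ·)).card : ℝ) + (A.filter (G.Adj v ·)).card := by
    exact_mod_cast hsw
  have h1' : (G.degree u : ℝ) = (A.filter (G.Adj u ·)).card + (Aᶜ.filter (G.Adj u ·)).card := by
    exact_mod_cast h1
  have h2' : (G.degree v : ℝ) = (A.filter (G.Adj v ·)).card + (Aᶜ.filter (G.Adj v ·)).card := by
    exact_mod_cast h2
  linarith
end

section
/- Let G be a graph partitioned into three sets A, B, C of sizes k, k+⌊r/2⌋, k+⌈r/2⌉ respectively (n = 3k+r, r ∈ {0,1,2}), with δ(G) ≥ 2n/3 and e(G[A]), e(G[B]), e(G[C]) ≤ μn²/18. Then each exceptional set X' = {v ∈ X : deg(v,Y) < k/3 for some other part Y} satisfies |X'| ≤ μn/2, for X ∈ {A, B, C}. -/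
/-!
A vertex `v ∈ X` with fewer than `k/3` neighbours in another part `Y` has degree at least
`2n/3`, while the third part has at most `k + ⌈r/2⌉` vertices; so `v` has at least `2n/9`
neighbours inside `X`. Summing over the exceptional vertices of `X` and using the handshake
lemma in `G[X]` gives `|X'| · 2n/9 ≤ 2 e(G[X]) ≤ μn²/9`.
-/

open Finset

namespace SimpleGraph

variable {V : Type*} [Fintype V] [DecidableEq V] (G : SimpleGraph V) [DecidableRel G.Adj]

theorem sum_card_filter_adj_eq_two_mul_card_filter_edgeFinset (X : Finset V) :
    ∑ v ∈ X, #(X.filter (G.Adj v ·)) =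
      2 * #(G.edgeFinset.filter fun e => ∀ v ∈ e, v ∈ X) := by
  have hedges :
      #(G.edgeFinset.filter fun e => ∀ v ∈ e, v ∈ X) = #(G.induce X).edgeFinset := by
    rw [← card_filter_edgeFinset_toFinset_subset]
    congr 1
    ext e
    simp [subset_iff]
  have hdegree (v : (X : Set V)) : (G.induce X).degree v = #(X.filter (G.Adj v ·)) := by
    rw [← card_neighborFinset_eq_degree, ← card_map (.subtype (· ∈ (X : Set V)))]
    congr 1
    ext w
    simp [and_comm]
  rw [hedges, ← sum_degrees_eq_twice_card_edges, ← sum_coe_sort X]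
  exact (Fintype.sum_congr _ _ hdegree).symm

theorem degree_le_card_filter_adj_add_add {X Y Z : Finset V}
    (hcover : ∀ w, w ∈ X ∨ w ∈ Y ∨ w ∈ Z) (v : V) :
    G.degree v ≤
      #(X.filter (G.Adj v ·)) + #(Y.filter (G.Adj v ·)) + #(Z.filter (G.Adj v ·)) := by
  have hsub : G.neighborFinset v ⊆
      X.filter (G.Adj v ·) ∪ Y.filter (G.Adj v ·) ∪ Z.filter (G.Adj v ·) := by
    intro w hw
    rw [mem_neighborFinset] at hw
    rcases hcover w with h | h | h <;> simp [h, hw]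
  rw [← card_neighborFinset_eq_degree]
  calc #(G.neighborFinset v)
      ≤ #(X.filter (G.Adj v ·) ∪ Y.filter (G.Adj v ·) ∪ Z.filter (G.Adj v ·)) :=
        card_le_card hsub
    _ ≤ _ := (card_union_le _ _).trans (Nat.add_le_add_right (card_union_le _ _) _)

variable {n k r : ℕ} {X Y Z : Finset V}

theorem two_mul_le_nine_mul_card_filter_adj_of_few_adj (hnkr : n = 3 * k + r) (hr : r < 3)
    (hcover : ∀ w, w ∈ X ∨ w ∈ Y ∨ w ∈ Z) (hZ : #Z ≤ k + (r + 1) / 2) {v : V}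
    (hdeg : 2 * n ≤ 3 * G.degree v) (hfew : 3 * #(Y.filter (G.Adj v ·)) < k) :
    2 * n ≤ 9 * #(X.filter (G.Adj v ·)) := by
  have hsplit := G.degree_le_card_filter_adj_add_add hcover v
  have hZv : #(Z.filter (G.Adj v ·)) ≤ k + (r + 1) / 2 := (card_filter_le _ _).trans hZ
  interval_cases r <;> omega

theorem card_filter_few_adj_le (hnkr : n = 3 * k + r) (hr : r < 3) {μ : ℝ}
    (hδ : 2 * n ≤ 3 * G.minDegree) (hcover : ∀ w, w ∈ X ∨ w ∈ Y ∨ w ∈ Z)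
    (hX : #X ≤ k + (r + 1) / 2) (hY : #Y ≤ k + (r + 1) / 2) (hZ : #Z ≤ k + (r + 1) / 2)
    (heX : (#(G.edgeFinset.filter fun e => ∀ v ∈ e, v ∈ X) : ℝ) ≤ μ * n ^ 2 / 18) :
    (#(X.filter fun v => (#(Y.filter (G.Adj v ·)) : ℝ) < k / 3 ∨
        (#(Z.filter (G.Adj v ·)) : ℝ) < k / 3) : ℝ) ≤ μ * n / 2 := by
  set X' := X.filter fun v => (#(Y.filter (G.Adj v ·)) : ℝ) < k / 3 ∨
    (#(Z.filter (G.Adj v ·)) : ℝ) < k / 3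
  have hX'X : X' ⊆ X := filter_subset _ _
  have hcover' : ∀ w, w ∈ X ∨ w ∈ Z ∨ w ∈ Y := fun w => (hcover w).imp_right Or.symm
  have hmany (v : V) (hv : v ∈ X') : 2 * n ≤ 9 * #(X.filter (G.Adj v ·)) := by
    have hdeg : 2 * n ≤ 3 * G.degree v := hδ.trans (by grw [G.minDegree_le_degree v])
    rcases (mem_filter.mp hv).2 with hfew | hfew
    · refine G.two_mul_le_nine_mul_card_filter_adj_of_few_adj hnkr hr hcover hZ hdeg ?_
      exact_mod_cast (lt_div_iff₀' three_pos).mp hfew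
    · refine G.two_mul_le_nine_mul_card_filter_adj_of_few_adj hnkr hr hcover' hY hdeg ?_
      exact_mod_cast (lt_div_iff₀' three_pos).mp hfew
  have hcount : #X' * (2 * n) ≤ 18 * #(G.edgeFinset.filter fun e => ∀ v ∈ e, v ∈ X) :=
    calc #X' * (2 * n) = ∑ _v ∈ X', 2 * n := by rw [sum_const, smul_eq_mul]
      _ ≤ ∑ v ∈ X', 9 * #(X.filter (G.Adj v ·)) := sum_le_sum hmany
      _ ≤ ∑ v ∈ X, 9 * #(X.filter (G.Adj v ·)) := sum_le_sum_of_subset hX'X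
      _ = 18 * #(G.edgeFinset.filter fun e => ∀ v ∈ e, v ∈ X) := by
        rw [← mul_sum, G.sum_card_filter_adj_eq_two_mul_card_filter_edgeFinset]
        ring
  rcases Nat.eq_zero_or_pos n with rfl | hn
  · have : #X' = 0 := by have := card_le_card hX'X; omega
    simp [this]
  · have hcount' : (#X' : ℝ) * (2 * n) ≤
        18 * #(G.edgeFinset.filter fun e => ∀ v ∈ e, v ∈ X) := by
      exact_mod_cast hcount
    refine le_of_mul_le_mul_right ?_ (show (0 : ℝ) < n by exact_mod_cast hn)
    linarith

end SimpleGraph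

theorem stmt_18_general {V : Type*} [Fintype V] [DecidableEq V] (n k r : ℕ)
    (hnkr : n = 3 * k + r) (hr : r < 3)
    (μ : ℝ) (G : SimpleGraph V) [DecidableRel G.Adj]
    (hδ : 2 * (n : ℝ) / 3 ≤ G.minDegree)
    (A B C : Finset V)
    (hunion : A ∪ B ∪ C = Finset.univ)
    (hAcard : A.card = k) (hBcard : B.card = k + r / 2) (hCcard : C.card = k + (r + 1) / 2)
    (heA : ((G.edgeFinset.filter fun e => ∀ v ∈ e, v ∈ A).card : ℝ) ≤ μ * n ^ 2 / 18)
    (heB : ((G.edgeFinset.filter fun e => ∀ v ∈ e, v ∈ B).card : ℝ) ≤ μ * n ^ 2 / 18)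
    (heC : ((G.edgeFinset.filter fun e => ∀ v ∈ e, v ∈ C).card : ℝ) ≤ μ * n ^ 2 / 18) :
    (((A.filter fun v => ((B.filter (G.Adj v ·)).card : ℝ) < k / 3 ∨
        ((C.filter (G.Adj v ·)).card : ℝ) < k / 3).card : ℝ) ≤ μ * n / 2) ∧
    (((B.filter fun v => ((A.filter (G.Adj v ·)).card : ℝ) < k / 3 ∨
        ((C.filter (G.Adj v ·)).card : ℝ) < k / 3).card : ℝ) ≤ μ * n / 2) ∧
    (((C.filter fun v => ((A.filter (G.Adj v ·)).card : ℝ) < k / 3 ∨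
        ((B.filter (G.Adj v ·)).card : ℝ) < k / 3).card : ℝ) ≤ μ * n / 2) := by
  have hδ' : 2 * n ≤ 3 * G.minDegree := by
    have : (2 * n : ℝ) ≤ 3 * G.minDegree := by linarith
    exact_mod_cast this
  have hcover (v : V) : v ∈ A ∨ v ∈ B ∨ v ∈ C := by
    simpa [or_assoc] using hunion.ge (Finset.mem_univ v)
  have hA : A.card ≤ k + (r + 1) / 2 := by omega
  have hB : B.card ≤ k + (r + 1) / 2 := by omega
  have hC : C.card ≤ k + (r + 1) / 2 := by omega
  refine ⟨?_, ?_, ?_⟩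
  · exact G.card_filter_few_adj_le hnkr hr hδ' hcover hA hB hC heA
  · exact G.card_filter_few_adj_le hnkr hr hδ' (by grind) hB hA hC heB
  · exact G.card_filter_few_adj_le hnkr hr hδ' (by grind) hC hA hB heC

/-- Let `G` be a graph on `n = 3k + r` vertices (`r ∈ {0,1,2}`) with `δ(G) ≥ 2n/3`, whose
vertex set is partitioned into sets `A`, `B`, `C` of sizes `k`, `k + ⌊r/2⌋`, `k + ⌈r/2⌉`,
each spanning at most `μn²/18` edges.  Then for each part `X`, the exceptional set
`X' = {v ∈ X : deg(v,Y) < k/3 for some other part Y}` has size at most `μn/2`. -/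
theorem stmt_18 {V : Type*} [Fintype V] [DecidableEq V] (n k r : ℕ)
    (hn : Fintype.card V = n) (hnkr : n = 3 * k + r) (hr : r < 3)
    (μ : ℝ) (hμ : 0 ≤ μ) (G : SimpleGraph V) [DecidableRel G.Adj]
    (hδ : 2 * (n : ℝ) / 3 ≤ G.minDegree)
    (A B C : Finset V) (hAB : Disjoint A B) (hAC : Disjoint A C) (hBC : Disjoint B C)
    (hunion : A ∪ B ∪ C = Finset.univ)
    (hAcard : A.card = k) (hBcard : B.card = k + r / 2) (hCcard : C.card = k + (r + 1) / 2)
    (heA : ((G.edgeFinset.filter fun e => ∀ v ∈ e, v ∈ A).card : ℝ) ≤ μ * n ^ 2 / 18)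
    (heB : ((G.edgeFinset.filter fun e => ∀ v ∈ e, v ∈ B).card : ℝ) ≤ μ * n ^ 2 / 18)
    (heC : ((G.edgeFinset.filter fun e => ∀ v ∈ e, v ∈ C).card : ℝ) ≤ μ * n ^ 2 / 18) :
    (((A.filter fun v => ((B.filter (G.Adj v ·)).card : ℝ) < k / 3 ∨
        ((C.filter (G.Adj v ·)).card : ℝ) < k / 3).card : ℝ) ≤ μ * n / 2) ∧
    (((B.filter fun v => ((A.filter (G.Adj v ·)).card : ℝ) < k / 3 ∨
        ((C.filter (G.Adj v ·)).card : ℝ) < k / 3).card : ℝ) ≤ μ * n / 2) ∧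
    (((C.filter fun v => ((A.filter (G.Adj v ·)).card : ℝ) < k / 3 ∨
        ((B.filter (G.Adj v ·)).card : ℝ) < k / 3).card : ℝ) ≤ μ * n / 2) :=
  stmt_18_general n k r hnkr hr μ G hδ A B C hunion hAcard hBcard hCcard heA heB heC
end
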